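/- arXiv:1905.08460 — 5 statements merged into one kernel-verified Lean document; each statement's English description precedes it below -/
import Mathlib

section
/- Let p and q be positive integers and let a_1, …, a_{p+q} be complex numbers such that every partial sum a_1+⋯+a_k (1 ≤ k ≤ p), every partial sum a_{p+1}+⋯+a_{p+k} (1 ≤ k ≤ q), and, for every σ ∈ Sh(p,q), every partial sum a_{σ^{-1}(1)}+⋯+a_{σ^{-1}(k)} (1 ≤ k ≤ p+q) is nonzero. Then f_p(a_1,…,a_p) · f_q(a_{p+1},…,a_{p+q}) = ∑_{σ ∈ Sh(p,q)} f_{p+q}(a_{σ^{-1}(1)},…,a_{σ^{-1}(p+q)}). -/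
open Finset

/-- `f_p(a_1, …, a_p) = ∏_{k=1}^p (a_1 + ⋯ + a_k)⁻¹`. -/
noncomputable def partialFracProd {n : ℕ} (a : Fin n → ℂ) : ℂ :=
  ∏ k : Fin n, (∑ j ∈ Finset.Iic k, a j)⁻¹

/-- `Sh(p,q)`: permutations of `{1, …, p+q}` increasing on the first `p`
and on the last `q` indices. -/
def Sh (p q : ℕ) : Finset (Equiv.Perm (Fin (p + q))) :=
  Finset.univ.filter (fun σ =>
    (∀ i j : Fin (p + q), i < j → (j : ℕ) < p → σ i < σ j) ∧
    (∀ i j : Fin (p + q), i < j → p ≤ (i : ℕ) → σ i < σ j))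

open List


noncomputable def gg : List ℂ → ℂ
  | [] => 1
  | x :: t => (x + t.sum)⁻¹ * gg t

def shuffles {α : Type*} : List α → List α → List (List α)
  | [], l2 => [l2]
  | l1, [] => [l1]
  | x :: s, y :: t => ((shuffles s (y :: t)).map (x :: ·)) ++ ((shuffles (x :: s) t).map (y :: ·))

@[simp] theorem shuffles_nil_left {α : Type*} (l2 : List α) : shuffles [] l2 = [l2] := by
  cases l2 <;> simp [shuffles]

@[simp] theorem shuffles_nil_right {α : Type*} (l1 : List α) : shuffles l1 [] = [l1] := by
  cases l1 <;> simp [shuffles]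

theorem shuffles_cons_cons {α : Type*} (x y : α) (s t : List α) :
    shuffles (x :: s) (y :: t) =
      ((shuffles s (y :: t)).map (x :: ·)) ++ ((shuffles (x :: s) t).map (y :: ·)) := by simp [shuffles]

theorem perm_of_mem_shuffles {α : Type*} : ∀ {l1 l2 u : List α},
    u ∈ shuffles l1 l2 → u ~ l1 ++ l2
  | [], l2, u, h => by simp_all
  | x :: s, [], u, h => by simp_all
  | x :: s, y :: t, u, h => by
    rw [shuffles_cons_cons, List.mem_append] at h
    rcases h with h | h <;> rw [List.mem_map] at h <;> obtain ⟨v, hv, rfl⟩ := h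
    · exact (perm_of_mem_shuffles hv).cons x
    · calc y :: v ~ y :: ((x :: s) ++ t) := (perm_of_mem_shuffles hv).cons y
        _ ~ (x :: s) ++ (y :: t) := by
          simpa using (List.perm_middle (a := y) (l₁ := x :: s) (l₂ := t)).symm

theorem cons_mem_shuffles_left {α : Type*} {x : α} {s l2 t : List α}
    (h : t ∈ shuffles s l2) : x :: t ∈ shuffles (x :: s) l2 := by
  cases l2 with
  | nil => simp_all
  | cons y t2 => rw [shuffles_cons_cons, List.mem_append]; exact Or.inl (List.mem_map_of_mem h)

theorem cons_mem_shuffles_right {α : Type*} {y : α} {l1 t2 t : List α}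
    (h : t ∈ shuffles l1 t2) : y :: t ∈ shuffles l1 (y :: t2) := by
  cases l1 with
  | nil => simp_all
  | cons x s => rw [shuffles_cons_cons, List.mem_append]; exact Or.inr (List.mem_map_of_mem h)

theorem append_mem_shuffles_left {α : Type*} : ∀ (l1 l2 : List α), l1 ++ l2 ∈ shuffles l1 l2
  | [], l2 => by simp
  | x :: s, l2 => cons_mem_shuffles_left (append_mem_shuffles_left s l2)

theorem append_mem_shuffles_right {α : Type*} : ∀ (l1 l2 : List α), l2 ++ l1 ∈ shuffles l1 l2
  | l1, [] => by simp
  | l1, y :: t => cons_mem_shuffles_right (append_mem_shuffles_right l1 t)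

theorem shuffles_map {α β : Type*} (f : α → β) :
    ∀ (l1 l2 : List α), shuffles (l1.map f) (l2.map f) = (shuffles l1 l2).map (List.map f)
  | [], l2 => by simp
  | x :: s, [] => by simp
  | x :: s, y :: t => by
    rw [List.map_cons, List.map_cons, shuffles_cons_cons, shuffles_cons_cons,
      ← List.map_cons (f := f) (a := x) (l := s), ← List.map_cons (f := f) (a := y) (l := t),
      shuffles_map f s (y :: t), shuffles_map f (x :: s) t]
    simp [List.map_map, Function.comp_def]

theorem mem_shuffles_filter {α : Type*} (P : α → Bool) :
    ∀ {l1 l2 u : List α}, (h1 : ∀ x ∈ l1, P x = true) → (h2 : ∀ x ∈ l2, P x = false) →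
    u ∈ shuffles l1 l2 → u.filter P = l1 ∧ u.filter (fun x => !P x) = l2
  | [], l2, u, h1, h2, h => by
    simp only [shuffles_nil_left, List.mem_singleton] at h
    subst h
    constructor
    · rw [List.filter_eq_nil_iff]; intro x hx; simp [h2 x hx]
    · rw [List.filter_eq_self]; intro x hx; simp [h2 x hx]
  | x :: s, [], u, h1, h2, h => by
    simp only [shuffles_nil_right, List.mem_singleton] at h
    subst h
    constructor
    · rw [List.filter_eq_self]; intro z hz; simp [h1 z hz]
    · rw [List.filter_eq_nil_iff]; intro z hz; simp [h1 z hz]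
  | x :: s, y :: t, u, h1, h2, h => by
    rw [shuffles_cons_cons, List.mem_append] at h
    rcases h with h | h <;> rw [List.mem_map] at h <;> obtain ⟨v, hv, rfl⟩ := h
    · obtain ⟨e1, e2⟩ := mem_shuffles_filter P (fun z hz => h1 z (List.mem_cons_of_mem _ hz)) h2 hv
      constructor
      · rw [List.filter_cons_of_pos (by simp [h1 x (List.mem_cons_self)])]; rw [e1]
      · rw [List.filter_cons_of_neg (by simp [h1 x (List.mem_cons_self)])]; exact e2
    · obtain ⟨e1, e2⟩ := mem_shuffles_filter P h1 (fun z hz => h2 z (List.mem_cons_of_mem _ hz)) hv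
      constructor
      · rw [List.filter_cons_of_neg (by simp [h2 y (List.mem_cons_self)])]; exact e1
      · rw [List.filter_cons_of_pos (by simp [h2 y (List.mem_cons_self)])]; rw [e2]

theorem mem_shuffles_of_filter {α : Type*} (P : α → Bool) :
    ∀ (u l1 l2 : List α), u.filter P = l1 → u.filter (fun x => !P x) = l2 →
    u ∈ shuffles l1 l2
  | [], l1, l2, e1, e2 => by
    simp only [List.filter_nil] at e1 e2; subst e1; subst e2; simp
  | z :: u, l1, l2, e1, e2 => by
    by_cases hz : P z = true
    · rw [List.filter_cons_of_pos hz] at e1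
      rw [List.filter_cons_of_neg (by simp [hz])] at e2
      subst e1
      exact cons_mem_shuffles_left (mem_shuffles_of_filter P u _ l2 rfl e2)
    · rw [List.filter_cons_of_neg hz] at e1
      rw [List.filter_cons_of_pos (by simp [Bool.not_eq_true] at hz ⊢; exact hz)] at e2
      subst e2
      exact cons_mem_shuffles_right (mem_shuffles_of_filter P u l1 _ e1 rfl)

theorem shuffles_nodup {α : Type*} (P : α → Bool) :
    ∀ (l1 l2 : List α), (∀ x ∈ l1, P x = true) → (∀ x ∈ l2, P x = false) →
    (shuffles l1 l2).Nodup
  | [], l2, _, _ => by simp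
  | x :: s, [], _, _ => by simp
  | x :: s, y :: t, h1, h2 => by
    rw [shuffles_cons_cons]
    apply List.Nodup.append
    · exact (shuffles_nodup P s (y :: t) (fun z hz => h1 z (List.mem_cons_of_mem _ hz)) h2).map
        (fun a b e => by injection e)
    · exact (shuffles_nodup P (x :: s) t h1 (fun z hz => h2 z (List.mem_cons_of_mem _ hz))).map
        (fun a b e => by injection e)
    · intro v hv hv'
      rw [List.mem_map] at hv hv'
      obtain ⟨w, _, rfl⟩ := hv
      obtain ⟨w', _, e⟩ := hv'
      have : y = x := by injection e
      have hx := h1 x (List.mem_cons_self)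
      have hy := h2 y (List.mem_cons_self)
      rw [this] at hy; rw [hx] at hy; exact Bool.noConfusion hy

theorem sum_of_mem_shuffles {l1 l2 u : List ℂ} (h : u ∈ shuffles l1 l2) :
    u.sum = l1.sum + l2.sum := by
  rw [(perm_of_mem_shuffles h).sum_eq, List.sum_append]

theorem gg_shuffle : ∀ (l1 l2 : List ℂ),
    (H : ∀ u ∈ shuffles l1 l2, ∀ v, v <:+ u → v ≠ [] → v.sum ≠ 0) →
    gg l1 * gg l2 = ((shuffles l1 l2).map gg).sum
  | [], l2, _ => by simp [gg]
  | x :: s, [], _ => by simp [gg]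
  | x :: s, y :: t, H => by
    set l1 := x :: s with hl1
    set l2 := y :: t with hl2
    have hA : l1.sum ≠ 0 := by
      refine H (l2 ++ l1) (append_mem_shuffles_right l1 l2) l1 ⟨l2, rfl⟩ (by simp [hl1])
    have hB : l2.sum ≠ 0 := by
      refine H (l1 ++ l2) (append_mem_shuffles_left l1 l2) l2 ⟨l1, rfl⟩ (by simp [hl2])
    have hT : l1.sum + l2.sum ≠ 0 := by
      have := H (l1 ++ l2) (append_mem_shuffles_left l1 l2) (l1 ++ l2) (List.suffix_refl _)
        (by simp [hl1])
      rwa [List.sum_append] at this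
    have H1 : ∀ u ∈ shuffles s l2, ∀ v, v <:+ u → v ≠ [] → v.sum ≠ 0 := by
      intro u hu v hv hne
      exact H (x :: u) (cons_mem_shuffles_left hu) v (hv.trans (List.suffix_cons x u)) hne
    have H2 : ∀ u ∈ shuffles l1 t, ∀ v, v <:+ u → v ≠ [] → v.sum ≠ 0 := by
      intro u hu v hv hne
      exact H (y :: u) (cons_mem_shuffles_right hu) v (hv.trans (List.suffix_cons y u)) hne
    have ih1 := gg_shuffle s l2 H1
    have ih2 := gg_shuffle l1 t H2
    rw [shuffles_cons_cons, List.map_append, List.sum_append, List.map_map, List.map_map]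
    have e1 : ((shuffles s l2).map (gg ∘ (x :: ·))).sum
        = (l1.sum + l2.sum)⁻¹ * ((shuffles s l2).map gg).sum := by
      rw [← List.sum_map_mul_left]
      congr 1
      refine List.map_congr_left (fun u hu => ?_)
      simp only [Function.comp_apply, gg, sum_of_mem_shuffles hu, hl1, List.sum_cons]
      ring_nf
    have e2 : ((shuffles l1 t).map (gg ∘ (y :: ·))).sum
        = (l1.sum + l2.sum)⁻¹ * ((shuffles l1 t).map gg).sum := by
      rw [← List.sum_map_mul_left]
      congr 1
      refine List.map_congr_left (fun u hu => ?_)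
      simp only [Function.comp_apply, gg, sum_of_mem_shuffles hu, hl2, List.sum_cons]
      ring_nf
    rw [e1, e2, ← ih1, ← ih2]
    have gl1 : gg l1 = (l1.sum)⁻¹ * gg s := by
      simp only [hl1, gg, List.sum_cons]
    have gl2 : gg l2 = (l2.sum)⁻¹ * gg t := by
      simp only [hl2, gg, List.sum_cons]
    rw [gl1, gl2]
    field_simp

theorem take_ofFn_sum {n : ℕ} (b : Fin n → ℂ) :
    ∀ m, m ≤ n → ((List.ofFn b).take m).sum
      = ∑ j ∈ Finset.univ.filter (fun j : Fin n => j.val < m), b j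
  | 0, _ => by simp
  | m + 1, hm => by
    have hmn : m < n := hm
    rw [List.take_succ, List.sum_append, take_ofFn_sum b m (le_of_lt hmn)]
    have hget : (List.ofFn b)[m]? = some (b ⟨m, hmn⟩) := by
      rw [List.getElem?_eq_getElem (by simpa using hmn)]
      simp
    rw [hget]
    have hins : Finset.univ.filter (fun j : Fin n => j.val < m + 1)
        = insert ⟨m, hmn⟩ (Finset.univ.filter (fun j : Fin n => j.val < m)) := by
      ext j
      simp only [Finset.mem_filter, Finset.mem_insert, Finset.mem_univ, true_and, Fin.ext_iff]
      omega
    rw [hins, Finset.sum_insert (by simp)]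
    simp [add_comm]

theorem Iic_sum_eq_take {n : ℕ} (b : Fin n → ℂ) (k : Fin n) :
    ∑ j ∈ Finset.Iic k, b j = ((List.ofFn b).take (k.val + 1)).sum := by
  rw [take_ofFn_sum b (k.val + 1) k.isLt]
  congr 1
  ext j
  simp only [Finset.mem_Iic, Finset.mem_filter, Finset.mem_univ, true_and, Fin.le_def]
  omega

theorem partialFracProd_eq_gg : ∀ {n : ℕ} (b : Fin n → ℂ),
    partialFracProd b = gg ((List.ofFn b).reverse)
  | 0, b => by simp [partialFracProd, gg]
  | n + 1, b => by
    rw [partialFracProd, Fin.prod_univ_castSucc]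
    have hofn : List.ofFn b = List.ofFn (fun k : Fin n => b k.castSucc) ++ [b (Fin.last n)] := by
      rw [List.ofFn_succ']
      simp [List.concat_eq_append]
    rw [hofn, List.reverse_append]
    simp only [List.reverse_singleton, List.singleton_append]
    rw [show gg (b (Fin.last n) :: (List.ofFn fun k : Fin n => b k.castSucc).reverse)
        = (b (Fin.last n) + ((List.ofFn fun k : Fin n => b k.castSucc).reverse).sum)⁻¹
          * gg ((List.ofFn fun k : Fin n => b k.castSucc).reverse) from rfl]
    rw [← partialFracProd_eq_gg (fun k : Fin n => b k.castSucc)]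
    have hlast : ∑ j ∈ Finset.Iic (Fin.last n), b j = b (Fin.last n)
        + ((List.ofFn fun k : Fin n => b k.castSucc).reverse).sum := by
      rw [List.sum_reverse, List.sum_ofFn]
      have : Finset.Iic (Fin.last n) = Finset.univ := by
        ext j; simp [Fin.le_last]
      rw [this, Fin.sum_univ_castSucc]
      ring
    rw [hlast, mul_comm]
    congr 1
    simp only [partialFracProd]
    refine Finset.prod_congr rfl (fun k _ => ?_)
    congr 1
    rw [Iic_sum_eq_take, Iic_sum_eq_take, hofn,
      List.take_append_of_le_length (by simp)]
    simp [Fin.coe_castSucc]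

theorem suffix_sum_eq {n : ℕ} (b : Fin n → ℂ) {v : List ℂ}
    (hv : v <:+ (List.ofFn b).reverse) (hne : v ≠ []) :
    ∃ k : Fin n, v.sum = ∑ j ∈ Finset.Iic k, b j := by
  have hpre : v.reverse <+: List.ofFn b := by
    rw [← List.reverse_reverse (List.ofFn b), List.reverse_prefix]
    exact hv
  have hlen : v.length ≤ n := by
    have := hpre.length_le
    simpa using this
  have hpos : 0 < v.length := List.length_pos_iff.mpr hne
  refine ⟨⟨v.length - 1, by omega⟩, ?_⟩
  rw [Iic_sum_eq_take]
  simp only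
  have h1 : v.length - 1 + 1 = v.length := by omega
  rw [h1, ← List.length_reverse (as := v), ← List.prefix_iff_eq_take.mp hpre]
  rw [List.sum_reverse]

def invList {n : ℕ} (σ : Equiv.Perm (Fin n)) : List (Fin n) :=
  List.ofFn (fun k => σ⁻¹ k)

theorem cond1_iff {p q : ℕ} (σ : Equiv.Perm (Fin (p + q))) :
    (∀ i j : Fin (p + q), i < j → (j : ℕ) < p → σ i < σ j) ↔
    (∀ k l : Fin (p + q), k < l → ((σ⁻¹ k : Fin (p+q)) : ℕ) < p →
      ((σ⁻¹ l : Fin (p+q)) : ℕ) < p → σ⁻¹ k < σ⁻¹ l) := by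
  constructor
  · intro h k l hkl hk hl
    rcases lt_trichotomy (σ⁻¹ k) (σ⁻¹ l) with h' | h' | h'
    · exact h'
    · exact absurd (σ.symm.injective (by simpa [Equiv.Perm.inv_def] using h'))
        (by intro e; rw [e] at hkl; exact lt_irrefl _ hkl)
    · exfalso
      have := h _ _ h' hk
      simp only [Equiv.Perm.inv_def, Equiv.apply_symm_apply] at this
      exact absurd hkl (not_lt.mpr (le_of_lt this))
  · intro h i j hij hj
    have hi : (i : ℕ) < p := lt_trans (Fin.lt_def.mp hij) hj
    rcases lt_trichotomy (σ i) (σ j) with h' | h' | h'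
    · exact h'
    · exact absurd (σ.injective h') (by intro e; rw [e] at hij; exact lt_irrefl _ hij)
    · exfalso
      have := h _ _ h' (by simpa using hj) (by simpa using hi)
      simp only [Equiv.Perm.inv_def, Equiv.symm_apply_apply] at this
      exact absurd hij (not_lt.mpr (le_of_lt this))

theorem cond2_iff {p q : ℕ} (σ : Equiv.Perm (Fin (p + q))) :
    (∀ i j : Fin (p + q), i < j → p ≤ (i : ℕ) → σ i < σ j) ↔
    (∀ k l : Fin (p + q), k < l → p ≤ ((σ⁻¹ k : Fin (p+q)) : ℕ) →
      p ≤ ((σ⁻¹ l : Fin (p+q)) : ℕ) → σ⁻¹ k < σ⁻¹ l) := by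
  constructor
  · intro h k l hkl hk hl
    rcases lt_trichotomy (σ⁻¹ k) (σ⁻¹ l) with h' | h' | h'
    · exact h'
    · exact absurd (σ.symm.injective (by simpa [Equiv.Perm.inv_def] using h'))
        (by intro e; rw [e] at hkl; exact lt_irrefl _ hkl)
    · exfalso
      have := h _ _ h' hl
      simp only [Equiv.Perm.inv_def, Equiv.apply_symm_apply] at this
      exact absurd hkl (not_lt.mpr (le_of_lt this))
  · intro h i j hij hi
    have hj : p ≤ (j : ℕ) := le_trans hi (le_of_lt (Fin.lt_def.mp hij))
    rcases lt_trichotomy (σ i) (σ j) with h' | h' | h'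
    · exact h'
    · exact absurd (σ.injective h') (by intro e; rw [e] at hij; exact lt_irrefl _ hij)
    · exfalso
      have := h _ _ h' (by simpa using hj) (by simpa using hi)
      simp only [Equiv.Perm.inv_def, Equiv.symm_apply_apply] at this
      exact absurd hij (not_lt.mpr (le_of_lt this))

theorem sorted_eq_of_mem_iff {α : Type*} [LinearOrder α] [DecidableEq α] {l1 l2 : List α}
    (h1 : l1.Pairwise (· < ·)) (h2 : l2.Pairwise (· < ·)) (h : ∀ x, x ∈ l1 ↔ x ∈ l2) :
    l1 = l2 := by
  refine List.Perm.eq_of_pairwise' h1 h2 ?_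
  refine List.perm_of_nodup_nodup_toFinset_eq h1.nodup h2.nodup ?_
  ext x
  simp [h x]

theorem filter1_eq {p q : ℕ} (σ : Equiv.Perm (Fin (p + q)))
    (hc : ∀ k l : Fin (p + q), k < l → ((σ⁻¹ k : Fin (p+q)) : ℕ) < p →
      ((σ⁻¹ l : Fin (p+q)) : ℕ) < p → σ⁻¹ k < σ⁻¹ l) :
    (invList σ).filter (fun x : Fin (p + q) => decide (x.val < p)) = List.ofFn (Fin.castAdd q : Fin p → Fin (p+q)) := by
  refine sorted_eq_of_mem_iff ?_ ?_ ?_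
  · rw [show (fun x : Fin (p + q) => decide (x.val < p)) = (fun x : Fin (p+q) =>
      decide ((fun y : Fin (p + q) => y.val < p) x)) from rfl]
    rw [List.pairwise_filter]
    rw [invList, List.pairwise_ofFn]
    exact fun k l hkl hk hl => hc k l hkl (by simpa using hk) (by simpa using hl)
  · rw [List.pairwise_ofFn]
    exact fun i j hij => Fin.strictMono_castAdd q hij
  · intro x
    rw [List.mem_filter]
    simp only [invList, List.mem_ofFn]
    constructor
    · rintro ⟨-, hx⟩
      refine ⟨⟨(x : ℕ), by simpa using hx⟩, ?_⟩
      ext; simp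
    · rintro ⟨i, rfl⟩
      exact ⟨⟨σ (Fin.castAdd q i), by simp⟩, by simp⟩

theorem filter2_eq {p q : ℕ} (σ : Equiv.Perm (Fin (p + q)))
    (hc : ∀ k l : Fin (p + q), k < l → p ≤ ((σ⁻¹ k : Fin (p+q)) : ℕ) →
      p ≤ ((σ⁻¹ l : Fin (p+q)) : ℕ) → σ⁻¹ k < σ⁻¹ l) :
    (invList σ).filter (fun x : Fin (p + q) => !decide (x.val < p)) = List.ofFn (Fin.natAdd p : Fin q → Fin (p+q)) := by
  refine sorted_eq_of_mem_iff ?_ ?_ ?_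
  · rw [show (fun x : Fin (p + q) => !decide (x.val < p)) = (fun x : Fin (p+q) =>
      decide ((fun y : Fin (p + q) => ¬ (y.val < p)) x)) from (by
      funext x
      by_cases h : x.val < p
      · simp [h]
      · simp [h])]
    rw [List.pairwise_filter]
    rw [invList, List.pairwise_ofFn]
    exact fun k l hkl hk hl => hc k l hkl (by simpa using hk) (by simpa using hl)
  · rw [List.pairwise_ofFn]
    exact fun i j hij => Fin.strictMono_natAdd p hij
  · intro x
    rw [List.mem_filter]
    simp only [invList, List.mem_ofFn]
    constructor
    · rintro ⟨-, hx⟩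
      simp only [Bool.not_eq_true', decide_eq_false_iff_not, not_lt] at hx
      refine ⟨⟨(x : ℕ) - p, by omega⟩, ?_⟩
      ext; simp [Fin.natAdd]; omega
    · rintro ⟨i, rfl⟩
      exact ⟨⟨σ (Fin.natAdd p i), by simp⟩, by simp⟩

theorem pairwise1_of_filter {p q : ℕ} (σ : Equiv.Perm (Fin (p + q)))
    (h : (invList σ).filter (fun x : Fin (p + q) => decide (x.val < p)) = List.ofFn (Fin.castAdd q : Fin p → Fin (p+q))) :
    ∀ k l : Fin (p + q), k < l → ((σ⁻¹ k : Fin (p+q)) : ℕ) < p →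
      ((σ⁻¹ l : Fin (p+q)) : ℕ) < p → σ⁻¹ k < σ⁻¹ l := by
  have hs : ((invList σ).filter (fun x : Fin (p + q) => decide (x.val < p))).Pairwise (· < ·) := by
    rw [h, List.pairwise_ofFn]
    exact fun i j hij => Fin.strictMono_castAdd q hij
  rw [show (fun x : Fin (p + q) => decide (x.val < p)) = (fun x : Fin (p+q) =>
      decide ((fun y : Fin (p + q) => y.val < p) x)) from rfl, List.pairwise_filter,
    invList, List.pairwise_ofFn] at hs
  exact fun k l hkl hk hl => hs hkl (by simpa using hk) (by simpa using hl)

theorem pairwise2_of_filter {p q : ℕ} (σ : Equiv.Perm (Fin (p + q)))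
    (h : (invList σ).filter (fun x : Fin (p + q) => !decide (x.val < p)) = List.ofFn (Fin.natAdd p : Fin q → Fin (p+q))) :
    ∀ k l : Fin (p + q), k < l → p ≤ ((σ⁻¹ k : Fin (p+q)) : ℕ) →
      p ≤ ((σ⁻¹ l : Fin (p+q)) : ℕ) → σ⁻¹ k < σ⁻¹ l := by
  have hs : ((invList σ).filter (fun x : Fin (p + q) => !decide (x.val < p))).Pairwise (· < ·) := by
    rw [h, List.pairwise_ofFn]
    exact fun i j hij => Fin.strictMono_natAdd p hij
  rw [show (fun x : Fin (p + q) => !decide (x.val < p)) = (fun x : Fin (p+q) =>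
      decide ((fun y : Fin (p + q) => ¬ (y.val < p)) x)) from (by
      funext x
      by_cases h : x.val < p
      · simp [h]
      · simp [h]),
    List.pairwise_filter, invList, List.pairwise_ofFn] at hs
  exact fun k l hkl hk hl => hs hkl (by simpa using hk) (by simpa using hl)

def toPermList {n : ℕ} (σ : Equiv.Perm (Fin n)) : List (Fin n) := (invList σ).reverse

theorem toPermList_injective {n : ℕ} : Function.Injective (toPermList (n := n)) := by
  intro σ τ h
  have h2 : invList σ = invList τ := List.reverse_injective h
  have h4 : σ⁻¹ = τ⁻¹ := Equiv.ext (congrFun (List.ofFn_injective h2))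
  rw [← inv_inv σ, ← inv_inv τ, h4]

theorem mem_Sh_iff {p q : ℕ} (σ : Equiv.Perm (Fin (p + q))) :
    σ ∈ Sh p q ↔ toPermList σ ∈
      shuffles (List.ofFn (Fin.castAdd q : Fin p → Fin (p+q))).reverse
        (List.ofFn (Fin.natAdd p : Fin q → Fin (p+q))).reverse := by
  have hp1 : ∀ x ∈ (List.ofFn (Fin.castAdd q : Fin p → Fin (p+q))).reverse,
      (fun x : Fin (p + q) => decide (x.val < p)) x = true := by
    intro x hx
    rw [List.mem_reverse, List.mem_ofFn] at hx
    obtain ⟨i, rfl⟩ := hx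
    simp
  have hp2 : ∀ x ∈ (List.ofFn (Fin.natAdd p : Fin q → Fin (p+q))).reverse,
      (fun x : Fin (p + q) => decide (x.val < p)) x = false := by
    intro x hx
    rw [List.mem_reverse, List.mem_ofFn] at hx
    obtain ⟨i, rfl⟩ := hx
    simp
  constructor
  · intro hσ
    rw [Sh, Finset.mem_filter] at hσ
    obtain ⟨-, c1, c2⟩ := hσ
    refine mem_shuffles_of_filter (fun x : Fin (p + q) => decide (x.val < p)) _ _ _ ?_ ?_
    · rw [toPermList, List.filter_reverse, filter1_eq σ ((cond1_iff σ).mp c1)]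
    · rw [toPermList, List.filter_reverse, filter2_eq σ ((cond2_iff σ).mp c2)]
  · intro h
    obtain ⟨e1, e2⟩ := mem_shuffles_filter _ hp1 hp2 h
    rw [toPermList, List.filter_reverse] at e1 e2
    have e1' := List.reverse_injective e1
    have e2' := List.reverse_injective e2
    rw [Sh, Finset.mem_filter]
    exact ⟨Finset.mem_univ _, (cond1_iff σ).mpr (pairwise1_of_filter σ e1'),
      (cond2_iff σ).mpr (pairwise2_of_filter σ e2')⟩

theorem exists_perm_of_mem_shuffles {p q : ℕ}
    {u : List (Fin (p + q))}
    (h : u ∈ shuffles (List.ofFn (Fin.castAdd q : Fin p → Fin (p+q))).reverse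
        (List.ofFn (Fin.natAdd p : Fin q → Fin (p+q))).reverse) :
    ∃ σ : Equiv.Perm (Fin (p + q)), toPermList σ = u := by
  have hperm := perm_of_mem_shuffles h
  have hmem : ∀ x : Fin (p + q), x ∈ u.reverse := by
    intro x
    rw [List.mem_reverse]
    refine hperm.mem_iff.mpr ?_
    rw [List.mem_append, List.mem_reverse, List.mem_reverse, List.mem_ofFn, List.mem_ofFn]
    by_cases hx : x.val < p
    · exact Or.inl ⟨⟨x.val, hx⟩, by ext; simp⟩
    · exact Or.inr ⟨⟨x.val - p, by omega⟩, by ext; simp [Fin.natAdd]; omega⟩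
  have hnodup : u.reverse.Nodup := by
    rw [List.nodup_reverse]
    refine hperm.nodup_iff.mpr ?_
    refine List.Nodup.append ?_ ?_ ?_
    · rw [List.nodup_reverse]; exact List.nodup_ofFn.mpr (Fin.strictMono_castAdd q).injective
    · rw [List.nodup_reverse]; exact List.nodup_ofFn.mpr (Fin.strictMono_natAdd p).injective
    · intro x hx hx'
      rw [List.mem_reverse, List.mem_ofFn] at hx hx'
      obtain ⟨i, rfl⟩ := hx
      obtain ⟨j, hj⟩ := hx'
      have := congrArg Fin.val hj
      simp at this
      omega
  have hlen : u.reverse.length = p + q := by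
    have := hperm.length_eq
    simp at this ⊢
    omega
  let e := List.Nodup.getEquivOfForallMemList u.reverse hnodup hmem
  let τ : Equiv.Perm (Fin (p + q)) := (finCongr hlen.symm).trans e
  refine ⟨τ.symm, ?_⟩
  have hinv : ∀ k : Fin (p + q), (τ.symm)⁻¹ k = u.reverse.get (Fin.cast hlen.symm k) := by
    intro k
    rfl
  rw [toPermList, invList]
  rw [show (fun k => (τ.symm)⁻¹ k) = (fun k => u.reverse.get (Fin.cast hlen.symm k)) from
    funext hinv]
  rw [← List.reverse_inj, List.reverse_reverse]
  apply List.ext_get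
  · simp [hlen]
  · intro i h1 h2
    simp [List.get_ofFn]

theorem shuffle_identity_for_partial_fraction_products
    (p q : ℕ) (hp : 0 < p) (hq : 0 < q) (a : Fin (p + q) → ℂ)
    (h1 : ∀ k : Fin p, ∑ j ∈ Finset.Iic k, a (Fin.castAdd q j) ≠ 0)
    (h2 : ∀ k : Fin q, ∑ j ∈ Finset.Iic k, a (Fin.natAdd p j) ≠ 0)
    (h3 : ∀ σ ∈ Sh p q, ∀ k : Fin (p + q),
      ∑ j ∈ Finset.Iic k, a (σ⁻¹ j) ≠ 0) :
    partialFracProd (fun k => a (Fin.castAdd q k)) *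
      partialFracProd (fun k => a (Fin.natAdd p k)) =
    ∑ σ ∈ Sh p q, partialFracProd (fun k => a (σ⁻¹ k)) := by
  set L1r := (List.ofFn (Fin.castAdd q : Fin p → Fin (p+q))).reverse with hL1r
  set L2r := (List.ofFn (Fin.natAdd p : Fin q → Fin (p+q))).reverse with hL2r
  have hp1 : ∀ x ∈ L1r, (fun x : Fin (p + q) => decide (x.val < p)) x = true := by
    intro x hx
    rw [hL1r, List.mem_reverse, List.mem_ofFn] at hx
    obtain ⟨i, rfl⟩ := hx
    simp
  have hp2 : ∀ x ∈ L2r, (fun x : Fin (p + q) => decide (x.val < p)) x = false := by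
    intro x hx
    rw [hL2r, List.mem_reverse, List.mem_ofFn] at hx
    obtain ⟨i, rfl⟩ := hx
    simp
  -- multiset equality
  have hmeq : (Sh p q).val.map toPermList = (shuffles L1r L2r : Multiset (List (Fin (p+q)))) := by
    have hnd1 : ((Sh p q).val.map toPermList).Nodup :=
      Multiset.Nodup.map toPermList_injective (Sh p q).nodup
    have hnd2 : (shuffles L1r L2r : Multiset (List (Fin (p+q)))).Nodup := by
      rw [Multiset.coe_nodup]
      exact shuffles_nodup _ L1r L2r hp1 hp2
    rw [Multiset.Nodup.ext hnd1 hnd2]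
    intro u
    rw [Multiset.mem_map, Multiset.mem_coe]
    constructor
    · rintro ⟨σ, hσ, rfl⟩
      exact (mem_Sh_iff σ).mp hσ
    · intro hu
      obtain ⟨σ, rfl⟩ := exists_perm_of_mem_shuffles hu
      exact ⟨σ, (mem_Sh_iff σ).mpr hu, rfl⟩
  -- nonvanishing hypothesis for gg_shuffle
  have H : ∀ u ∈ shuffles (L1r.map a) (L2r.map a), ∀ v, v <:+ u → v ≠ [] → v.sum ≠ 0 := by
    intro u hu v hv hne
    rw [shuffles_map, List.mem_map] at hu
    obtain ⟨u', hu', rfl⟩ := hu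
    obtain ⟨σ, rfl⟩ := exists_perm_of_mem_shuffles hu'
    have hσ : σ ∈ Sh p q := (mem_Sh_iff σ).mpr hu'
    have hrw : (toPermList σ).map a = (List.ofFn (fun k => a (σ⁻¹ k))).reverse := by
      rw [toPermList, invList, List.map_reverse, List.map_ofFn]
      rfl
    rw [hrw] at hv
    obtain ⟨k, hk⟩ := suffix_sum_eq (fun k => a (σ⁻¹ k)) hv hne
    rw [hk]
    exact h3 σ hσ k
  -- main calculation
  have e1 : partialFracProd (fun k => a (Fin.castAdd q k)) = gg (L1r.map a) := by
    rw [partialFracProd_eq_gg, hL1r, List.map_reverse, List.map_ofFn]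
    rfl
  have e2 : partialFracProd (fun k => a (Fin.natAdd p k)) = gg (L2r.map a) := by
    rw [partialFracProd_eq_gg, hL2r, List.map_reverse, List.map_ofFn]
    rfl
  rw [e1, e2, gg_shuffle (L1r.map a) (L2r.map a) H, shuffles_map, List.map_map]
  have e3 : ∑ σ ∈ Sh p q, partialFracProd (fun k => a (σ⁻¹ k))
      = ((Sh p q).val.map (fun σ => gg (((toPermList σ).map a)))).sum := by
    rw [Finset.sum]
    congr 1
    refine Multiset.map_congr rfl (fun σ _ => ?_)
    rw [partialFracProd_eq_gg]
    congr 1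
    rw [toPermList, invList, List.map_reverse, List.map_ofFn]
    rfl
  rw [e3]
  rw [show ((Sh p q).val.map (fun σ => gg (((toPermList σ).map a))))
      = ((Sh p q).val.map toPermList).map (fun u => gg (u.map a)) from by
    rw [Multiset.map_map]; rfl]
  rw [hmeq]
  rw [show ((shuffles L1r L2r : Multiset (List (Fin (p+q)))).map (fun u => gg (u.map a)))
      = ((shuffles L1r L2r).map (fun u => gg (u.map a)) : Multiset ℂ) from by
    rw [Multiset.map_coe]]
  rw [Multiset.sum_coe]
  rfl
end

section
/- Let p be a positive integer and let a_1, …, a_p be complex numbers each having positive real part. Then the function x ↦ e^{-(a_1 x_1 + ⋯ + a_p x_p)} is Lebesgue-integrable on the open cone C_p = {(x_1,…,x_p) ∈ ℝ^p : x_1 > x_2 > ⋯ > x_p > 0}, and ∫_{C_p} e^{-(a_1 x_1 + ⋯ + a_p x_p)} dx_1 ⋯ dx_p = f_p(a_1,…,a_p). -/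
open MeasureTheory Finset

/-- The open cone `C_p = {x ∈ ℝ^p : x_1 > x_2 > ⋯ > x_p > 0}`. -/
def cone (p : ℕ) : Set (Fin p → ℝ) :=
  {x | (∀ i j : Fin p, i < j → x j < x i) ∧ ∀ i, 0 < x i}

/-!
Substitute `x_i = y_i + y_{i+1} + ⋯ + y_p`. This linear map is unipotent upper triangular, so it
preserves Lebesgue measure, and it carries the open positive orthant onto `C_p`. Exchanging the
order of summation turns `∑ a_i x_i` into `∑_k (a_1 + ⋯ + a_k) y_k`, so by Fubini the integral
splits as `∏_k ∫_0^∞ e^{-(a_1 + ⋯ + a_k) t} dt = ∏_k (a_1 + ⋯ + a_k)⁻¹`.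
-/

theorem integrableOn_cexp_neg_mul_Ioi {b : ℂ} (hb : 0 < b.re) :
    IntegrableOn (fun t : ℝ => Complex.exp (-(b * t))) (Set.Ioi 0) := by
  simpa using integrableOn_exp_mul_complex_Ioi (a := -b) (by simpa using hb) 0

theorem integral_cexp_neg_mul_Ioi {b : ℂ} (hb : 0 < b.re) :
    ∫ t : ℝ in Set.Ioi 0, Complex.exp (-(b * t)) = b⁻¹ := by
  simpa using integral_exp_mul_complex_Ioi (a := -b) (by simpa using hb) 0

section Orthant

variable {ι : Type*} [Fintype ι]

theorem cexp_neg_sum_mul (b : ι → ℂ) (y : ι → ℝ) :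
    Complex.exp (-(∑ i, b i * y i)) = ∏ i, Complex.exp (-(b i * y i)) := by
  rw [← sum_neg_distrib, Complex.exp_sum]

theorem volume_restrict_pi_Ioi_zero :
    (volume : Measure (ι → ℝ)).restrict (Set.univ.pi fun _ => Set.Ioi 0) =
      Measure.pi fun _ => volume.restrict (Set.Ioi 0) := by
  rw [volume_pi, Measure.restrict_pi_pi]

theorem integrableOn_cexp_neg_sum_mul_pi_Ioi {b : ι → ℂ} (hb : ∀ i, 0 < (b i).re) :
    IntegrableOn (fun y : ι → ℝ => Complex.exp (-(∑ i, b i * y i)))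
      (Set.univ.pi fun _ => Set.Ioi 0) := by
  simp_rw [IntegrableOn, volume_restrict_pi_Ioi_zero, cexp_neg_sum_mul]
  exact Integrable.fintype_prod fun i => integrableOn_cexp_neg_mul_Ioi (hb i)

theorem setIntegral_cexp_neg_sum_mul_pi_Ioi {b : ι → ℂ} (hb : ∀ i, 0 < (b i).re) :
    ∫ y : ι → ℝ in Set.univ.pi fun _ => Set.Ioi 0, Complex.exp (-(∑ i, b i * y i)) =
      ∏ i, (b i)⁻¹ := by
  simp_rw [volume_restrict_pi_Ioi_zero, cexp_neg_sum_mul,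
    integral_fintype_prod_eq_prod (fun i (t : ℝ) => Complex.exp (-(b i * t)))]
  exact prod_congr rfl fun i _ => integral_cexp_neg_mul_Ioi (hb i)

end Orthant

section TailSum

variable {p : ℕ}

def tailSum (p : ℕ) : (Fin p → ℝ) →ₗ[ℝ] Fin p → ℝ :=
  Matrix.toLin' (Matrix.of fun i k => if i ≤ k then 1 else 0)

theorem tailSum_apply (y : Fin p → ℝ) (i : Fin p) : tailSum p y i = ∑ k ∈ Ici i, y k := by
  simp [tailSum, Matrix.mulVec, dotProduct, ← Finset.sum_filter, Finset.filter_le_eq_Ici]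

theorem det_tailSum : LinearMap.det (tailSum p) = 1 := by
  rw [tailSum, LinearMap.det_toLin', Matrix.det_of_isUpperTriangular]
  · simp
  · intro i j hij
    simpa using hij

theorem measurePreserving_tailSum : MeasurePreserving (tailSum p) := by
  refine ⟨(tailSum p).continuous_of_finiteDimensional.measurable, ?_⟩
  rw [Real.map_linearMap_volume_pi_eq_smul_volume_pi (by simp [det_tailSum]), det_tailSum]
  simp

theorem measurableEmbedding_tailSum : MeasurableEmbedding (tailSum p) :=
  ((tailSum p).equivOfDetNeZero (by simp [det_tailSum])).toContinuousLinearEquiv.toHomeomorph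
    |>.measurableEmbedding

theorem tailSum_apply_eq_add (y : Fin p → ℝ) (i : Fin p) :
    tailSum p y i = y i + ∑ k ∈ Ioi i, y k := by
  rw [tailSum_apply, Ici_eq_cons_Ioi, sum_cons]

theorem tailSum_mem_cone {y : Fin p → ℝ} (hy : ∀ k, 0 < y k) : tailSum p y ∈ cone p := by
  refine ⟨fun i j hij => ?_, fun i => ?_⟩
  · have hsub : Ici j ⊆ Ici i := Ici_subset_Ici.mpr hij.le
    have hdiff : 0 < ∑ k ∈ Ici i \ Ici j, y k :=
      sum_pos (fun k _ => hy k) ⟨i, by simpa using hij⟩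
    rw [tailSum_apply, tailSum_apply, ← sum_sdiff hsub]
    linarith
  · rw [tailSum_apply]
    exact sum_pos (fun k _ => hy k) ⟨i, mem_Ici.mpr le_rfl⟩

theorem pos_of_tailSum_mem_cone {y : Fin p → ℝ} (hy : tailSum p y ∈ cone p) (k : Fin p) :
    0 < y k := by
  obtain ⟨hanti, hpos⟩ := hy
  rcases (Ioi k).eq_empty_or_nonempty with hempty | hne
  · simpa [tailSum_apply_eq_add, hempty] using hpos k
  · set j := (Ioi k).min' hne
    have hkj : k < j := mem_Ioi.mp ((Ioi k).min'_mem hne)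
    have hIoi : Ioi k = Ici j := by
      ext m
      exact ⟨fun hm => mem_Ici.mpr ((Ioi k).min'_le m hm),
        fun hm => mem_Ioi.mpr (hkj.trans_le (mem_Ici.mp hm))⟩
    have hstep := hanti k j hkj
    rw [tailSum_apply_eq_add y k, hIoi, ← tailSum_apply] at hstep
    linarith

theorem preimage_tailSum_cone : tailSum p ⁻¹' cone p = Set.univ.pi fun _ => Set.Ioi 0 := by
  ext y
  simp only [Set.mem_preimage, Set.mem_univ_pi, Set.mem_Ioi]
  exact ⟨pos_of_tailSum_mem_cone, tailSum_mem_cone⟩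

theorem sum_mul_tailSum (a : Fin p → ℂ) (y : Fin p → ℝ) :
    ∑ i, a i * (tailSum p y i : ℂ) = ∑ k, (∑ j ∈ Iic k, a j) * y k := by
  simp_rw [tailSum_apply, Complex.ofReal_sum, mul_sum, sum_mul]
  exact sum_comm' fun i k => by simp

end TailSum

theorem integral_exp_over_cone_general
    (p : ℕ) (a : Fin p → ℂ) (ha : ∀ i, 0 < (a i).re) :
    IntegrableOn
      (fun x : Fin p → ℝ => Complex.exp (-(∑ i, a i * (x i : ℂ)))) (cone p)
      volume ∧
    ∫ x in cone p, Complex.exp (-(∑ i, a i * (x i : ℂ))) =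
      partialFracProd a := by
  have hpartial : ∀ k, 0 < (∑ j ∈ Iic k, a j).re := fun k => by
    rw [Complex.re_sum]
    exact sum_pos (fun j _ => ha j) ⟨k, mem_Iic.mpr le_rfl⟩
  have hsubst : (fun x : Fin p → ℝ => Complex.exp (-(∑ i, a i * (x i : ℂ)))) ∘ tailSum p =
      fun y => Complex.exp (-(∑ k, (∑ j ∈ Iic k, a j) * y k)) := by
    ext y
    rw [Function.comp_apply, sum_mul_tailSum]
  constructor
  · rw [← measurePreserving_tailSum.integrableOn_comp_preimage measurableEmbedding_tailSum,
      hsubst, preimage_tailSum_cone]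
    exact integrableOn_cexp_neg_sum_mul_pi_Ioi hpartial
  · rw [← measurePreserving_tailSum.setIntegral_preimage_emb measurableEmbedding_tailSum,
      preimage_tailSum_cone]
    exact (congrArg _ hsubst).trans (setIntegral_cexp_neg_sum_mul_pi_Ioi hpartial)

theorem integral_exp_over_cone
    (p : ℕ) (hp : 0 < p) (a : Fin p → ℂ) (ha : ∀ i, 0 < (a i).re) :
    IntegrableOn
      (fun x : Fin p → ℝ => Complex.exp (-(∑ i, a i * (x i : ℂ)))) (cone p)
      volume ∧
    ∫ x in cone p, Complex.exp (-(∑ i, a i * (x i : ℂ))) =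
      partialFracProd a :=
  integral_exp_over_cone_general p a ha
end

section
/- Let I be an index set, d ≥ 1, α : I → ℝ^d a map, and 𝐢 = (i_1,…,i_p) a finite sequence in I. Let x ∈ ℝ^d be such that ⟨β^𝐢_k − β^𝐢_j, x⟩ ≠ 0 for all 0 ≤ j ≠ k ≤ p (in particular the β^𝐢_j are pairwise distinct). Then the Fourier transform of the measure D_𝐢 evaluated at x satisfies ∫_{ℝ^d} e^{⟨y, x⟩} dD_𝐢(y) = ∑_{j=0}^p e^{−⟨β^𝐢_j, x⟩} / ∏_{k ≠ j} ⟨β^𝐢_k − β^𝐢_j, x⟩. -/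
open MeasureTheory Finset Polynomial

/-- Lebesgue measure `δ_{Δ^p}` on the standard `p`-simplex
`Δ^p = {c ∈ ℝ_{≥0}^{p+1} : c_0 + ⋯ + c_p = 1}`, realized as the pushforward of
`p`-dimensional Lebesgue measure on `{c ∈ ℝ_{≥0}^p : ∑ c_k ≤ 1}` under
`(c_1, …, c_p) ↦ (1 − ∑ c_k, c_1, …, c_p)`. -/
noncomputable def simplexMeasure (p : ℕ) : Measure (Fin (p + 1) → ℝ) :=
  Measure.map (fun c : Fin p → ℝ => Fin.cons (1 - ∑ k, c k) c)
    (volume.restrict {c : Fin p → ℝ | (∀ k, 0 ≤ c k) ∧ ∑ k, c k ≤ 1})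

/-- The partial sums `β^𝐢_k = α_{i_1} + ⋯ + α_{i_k}` (with `β^𝐢_0 = 0`). -/
noncomputable def beta {I : Type*} {d : ℕ} (α : I → Fin d → ℝ) {p : ℕ}
    (i : Fin p → I) (k : Fin (p + 1)) : Fin d → ℝ :=
  ∑ j ∈ Finset.univ.filter (fun j : Fin p => (j : ℕ) < (k : ℕ)), α (i j)

/-- The measure `D_𝐢 = (π_𝐢)_* δ_{Δ^p}` on `ℝ^d`, where
`π_𝐢(c_0, …, c_p) = −∑_k c_k β^𝐢_k`. -/
noncomputable def Dmeas {I : Type*} {d : ℕ} (α : I → Fin d → ℝ) {p : ℕ}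
    (i : Fin p → I) : Measure (Fin d → ℝ) :=
  Measure.map (fun c : Fin (p + 1) → ℝ => -∑ k : Fin (p + 1), c k • beta α i k)
    (simplexMeasure p)



lemma leadingCoeff_lagrange_basis {F : Type*} [Field F] {ι : Type*} [DecidableEq ι]
    (s : Finset ι) (v : ι → F) (i : ι) (hvs : Set.InjOn v s) (hi : i ∈ s) :
    (Lagrange.basis s v i).leadingCoeff = ∏ j ∈ s.erase i, (v i - v j)⁻¹ := by
  rw [Lagrange.basis, leadingCoeff_prod]
  refine prod_congr rfl fun j hj => ?_
  have hne : v i ≠ v j := by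
    rcases mem_erase.mp hj with ⟨hij, hjs⟩
    exact fun h => hij (hvs hjs hi h.symm)
  rw [Lagrange.basisDivisor, leadingCoeff_mul, leadingCoeff_C, leadingCoeff_X_sub_C, mul_one]

lemma zerosum_aux {F : Type*} [Field F] (n : ℕ) (v : Fin (n + 2) → F)
    (hv : Function.Injective v) :
    ∑ j : Fin (n + 2), (∏ k ∈ univ.erase j, (v j - v k))⁻¹ = 0 := by
  have h := Lagrange.sum_basis (s := (univ : Finset (Fin (n+2)))) (v := v)
    hv.injOn univ_nonempty
  have hc := congrArg (fun q : F[X] => q.coeff (n + 1)) h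
  simp only [finset_sum_coeff, coeff_one] at hc
  rw [if_neg (by omega)] at hc
  rw [← hc]
  refine sum_congr rfl fun j _ => ?_
  have hd : (Lagrange.basis univ v j).natDegree = n + 1 := by
    rw [Lagrange.natDegree_basis hv.injOn (mem_univ j)]
    simp
  rw [← hd, coeff_natDegree, leadingCoeff_lagrange_basis _ _ _ hv.injOn (mem_univ j),
    ← prod_inv_distrib]

lemma zerosum (n : ℕ) (v : Fin (n + 2) → ℝ) (hv : ∀ j k, j ≠ k → v k - v j ≠ 0) :
    ∑ j : Fin (n + 2), (∏ k ∈ univ.erase j, (v k - v j))⁻¹ = 0 := by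
  have hinj : Function.Injective v := fun a b hab => by
    by_contra h; exact hv a b h (by rw [hab, sub_self])
  have key := zerosum_aux n v hinj
  have : ∀ j : Fin (n + 2), (∏ k ∈ univ.erase j, (v k - v j))
      = (-1) ^ (n + 1) * ∏ k ∈ univ.erase j, (v j - v k) := by
    intro j
    have hc : (univ.erase j).card = n + 1 := by
      rw [card_erase_of_mem (mem_univ j)]; simp
    rw [← hc, ← prod_const, ← prod_mul_distrib]
    refine prod_congr rfl fun k _ => by ring
  calc ∑ j : Fin (n + 2), (∏ k ∈ univ.erase j, (v k - v j))⁻¹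
      = ∑ j : Fin (n + 2), ((-1 : ℝ) ^ (n + 1) * (∏ k ∈ univ.erase j, (v j - v k))⁻¹) := by
        refine sum_congr rfl fun j _ => ?_
        rw [this j, mul_inv]
        congr 1
        rcases Nat.even_or_odd (n+1) with h | h
        · simp [h.neg_one_pow]
        · rw [h.neg_one_pow]; norm_num
    _ = 0 := by rw [← mul_sum, key, mul_zero]

lemma exp_integral (c : ℝ) (hc : c ≠ 0) (s : ℝ) :
    ∫ t in (0:ℝ)..s, Real.exp (c * t) = (Real.exp (c * s) - 1) / c := by
  have : ∀ t ∈ Set.uIcc (0:ℝ) s, HasDerivAt (fun u => Real.exp (c * u) / c)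
      (Real.exp (c * t)) t := by
    intro t _
    have h1 : HasDerivAt (fun u : ℝ => c * u) c t := by
      simpa using (hasDerivAt_id t).const_mul c
    have h2 := (h1.exp).div_const c
    simpa [mul_comm, mul_div_assoc, mul_div_cancel_left₀ _ hc] using h2
  rw [intervalIntegral.integral_eq_sub_of_hasDerivAt this
    ((Real.continuous_exp.comp (continuous_const.mul continuous_id)).intervalIntegrable 0 s)]
  rw [mul_zero, Real.exp_zero]
  ring

def Tset (p : ℕ) (s : ℝ) : Set (Fin p → ℝ) := {c | (∀ k, 0 ≤ c k) ∧ ∑ k, c k ≤ s}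

lemma isClosed_Tset (p : ℕ) (s : ℝ) : IsClosed (Tset p s) := by
  have h1 : IsClosed {c : Fin p → ℝ | ∀ k, 0 ≤ c k} := by
    have : {c : Fin p → ℝ | ∀ k, 0 ≤ c k} = ⋂ k, {c | 0 ≤ c k} := by
      ext c; simp
    rw [this]
    exact isClosed_iInter fun k => isClosed_le continuous_const (continuous_apply k)
  have h2 : IsClosed {c : Fin p → ℝ | ∑ k, c k ≤ s} :=
    isClosed_le (by continuity) continuous_const
  exact h1.inter h2

lemma measurableSet_Tset (p : ℕ) (s : ℝ) : MeasurableSet (Tset p s) :=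
  (isClosed_Tset p s).measurableSet

lemma isCompact_Tset (p : ℕ) (s : ℝ) : IsCompact (Tset p s) := by
  refine IsCompact.of_isClosed_subset (isCompact_Icc (a := (0 : Fin p → ℝ))
    (b := fun _ => max s 0)) (isClosed_Tset p s) ?_
  rintro c ⟨h1, h2⟩
  constructor
  · intro k; exact h1 k
  · intro k
    calc c k ≤ ∑ j, c j := Finset.single_le_sum (fun j _ => h1 j) (mem_univ k)
      _ ≤ s := h2
      _ ≤ max s 0 := le_max_left _ _

open MeasureTheory

noncomputable def Fint (p : ℕ) (B : Fin (p + 1) → ℝ) (s : ℝ) : ℝ :=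
  ∫ c in Tset p s, Real.exp (-((s - ∑ k, c k) * B 0 + ∑ k : Fin p, c k * B k.succ))

noncomputable def RHSsum (p : ℕ) (B : Fin (p + 1) → ℝ) (s : ℝ) : ℝ :=
  ∑ j, Real.exp (-(s * B j)) / ∏ k ∈ univ.erase j, (B k - B j)

lemma Tset_empty (p : ℕ) {s : ℝ} (hs : s < 0) : Tset p s = ∅ := by
  ext c
  simp only [Tset, Set.mem_setOf_eq, Set.mem_empty_iff_false, iff_false, not_and]
  intro h1 h2
  have : (0:ℝ) ≤ ∑ k, c k := Finset.sum_nonneg fun k _ => h1 k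
  linarith

lemma Fint_neg (p : ℕ) (B : Fin (p + 1) → ℝ) {s : ℝ} (hs : s < 0) : Fint p B s = 0 := by
  rw [Fint, Tset_empty p hs, Measure.restrict_empty, integral_zero_measure]

lemma Fint_zero_case (B : Fin 1 → ℝ) {s : ℝ} (hs : 0 ≤ s) :
    Fint 0 B s = Real.exp (-(s * B 0)) := by
  have hT : Tset 0 s = Set.univ := by
    ext c
    simp [Tset, hs]
  rw [Fint, hT, Measure.restrict_univ]
  simp only [Finset.univ_eq_empty, Finset.sum_empty, sub_zero, add_zero]
  rw [integral_const]
  have : (volume : Measure (Fin 0 → ℝ)) Set.univ = 1 := by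
    simp [volume_pi, Measure.pi_empty_univ]
  simp [measureReal_def, this]

lemma sa_zero (p : ℕ) : (1 : Fin (p + 2)).succAbove 0 = 0 := by
  simp [Fin.succAbove, Fin.lt_def]

lemma sa_succ (p : ℕ) (k : Fin p) :
    (1 : Fin (p + 2)).succAbove k.succ = k.succ.succ := by
  simp [Fin.succAbove, Fin.lt_def]

lemma sa_ne_one (p : ℕ) (k : Fin (p + 1)) : (1 : Fin (p + 2)).succAbove k ≠ 1 :=
  Fin.succAbove_ne 1 k

lemma prod_erase_eq_prod_ite {ι M : Type*} [DecidableEq ι] [CommMonoid M]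
    (s : Finset ι) {a : ι} (ha : a ∈ s) (f : ι → M) :
    ∏ x ∈ s.erase a, f x = ∏ x ∈ s, (if x = a then 1 else f x) := by
  rw [← Finset.mul_prod_erase s _ ha, if_pos rfl, one_mul]
  exact Finset.prod_congr rfl fun x hx => by
    rw [if_neg (Finset.ne_of_mem_erase hx)]

lemma prod_succAbove_erase (p : ℕ) (B : Fin (p + 2) → ℝ) (j : Fin (p + 1)) :
    (∏ k ∈ univ.erase ((1 : Fin (p+2)).succAbove j), (B k - B ((1 : Fin (p+2)).succAbove j)))
    = (B 1 - B ((1 : Fin (p+2)).succAbove j)) *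
        ∏ k ∈ univ.erase j,
          (B ((1 : Fin (p+2)).succAbove k) - B ((1 : Fin (p+2)).succAbove j)) := by
  rw [prod_erase_eq_prod_ite _ (mem_univ _), prod_erase_eq_prod_ite _ (mem_univ _)]
  rw [Fin.prod_univ_succAbove
    (fun k => if k = (1 : Fin (p+2)).succAbove j then 1
      else B k - B ((1 : Fin (p+2)).succAbove j)) 1]
  rw [if_neg (Ne.symm (sa_ne_one p j))]
  congr 1
  refine Finset.prod_congr rfl fun k _ => ?_
  simp only [Fin.succAbove_right_injective.eq_iff]

lemma rhs_rec (p : ℕ) (B : Fin (p + 2) → ℝ)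
    (hB : ∀ j k : Fin (p + 2), j ≠ k → B k - B j ≠ 0) (s : ℝ) :
    ∑ j : Fin (p + 1),
      ((Real.exp (-(s * B 1)) - Real.exp (-(s * B ((1:Fin (p+2)).succAbove j)))) /
        (B ((1:Fin (p+2)).succAbove j) - B 1)) /
        ∏ k ∈ univ.erase j, (B ((1:Fin (p+2)).succAbove k) - B ((1:Fin (p+2)).succAbove j))
    = RHSsum (p + 1) B s := by
  set σ : Fin (p + 1) → Fin (p + 2) := (1 : Fin (p+2)).succAbove with hσ
  set E : Fin (p + 2) → ℝ := fun j => Real.exp (-(s * B j)) with hE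
  set P : Fin (p + 2) → ℝ := fun j => ∏ k ∈ univ.erase j, (B k - B j) with hP
  set Q : Fin (p + 1) → ℝ := fun j => ∏ k ∈ univ.erase j, (B (σ k) - B (σ j)) with hQ
  have hσinj : Function.Injective σ := Fin.succAbove_right_injective
  have hQne : ∀ j, Q j ≠ 0 := by
    intro j
    rw [hQ]
    refine Finset.prod_ne_zero_iff.mpr fun k hk => ?_
    exact hB (σ j) (σ k) (fun h => (Finset.ne_of_mem_erase hk) (hσinj h.symm))
  have hσne1 : ∀ j, σ j ≠ 1 := fun j => sa_ne_one p j
  have hPσ : ∀ j, P (σ j) = (B 1 - B (σ j)) * Q j := fun j => prod_succAbove_erase p B j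
  have hz := zerosum p B hB
  rw [Fin.sum_univ_succAbove (fun j' => (P j')⁻¹) 1] at hz
  have hP1 : (P 1)⁻¹ = ∑ j, ((B (σ j) - B 1) * Q j)⁻¹ := by
    have : (P 1)⁻¹ = -∑ j, (P (σ j))⁻¹ := by linarith [hz]
    rw [this, ← Finset.sum_neg_distrib]
    refine Finset.sum_congr rfl fun j _ => ?_
    rw [hPσ j]
    have : B 1 - B (σ j) = -(B (σ j) - B 1) := by ring
    rw [this, neg_mul, neg_inv, neg_neg]
  rw [RHSsum, Fin.sum_univ_succAbove (fun j' => E j' / P j') 1]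
  have hrhs2 : ∀ j, E (σ j) / P (σ j) = -(E (σ j) * ((B (σ j) - B 1) * Q j)⁻¹) := by
    intro j
    rw [hPσ j, div_eq_mul_inv]
    have : B 1 - B (σ j) = -(B (σ j) - B 1) := by ring
    rw [this, neg_mul, inv_neg, mul_neg]
  rw [div_eq_mul_inv (E 1), hP1, Finset.mul_sum]
  rw [Finset.sum_congr rfl fun j _ => hrhs2 j]
  rw [← Finset.sum_add_distrib]
  refine Finset.sum_congr rfl fun j _ => ?_
  rw [div_div, div_eq_mul_inv, sub_mul]
  ring

lemma Fint_succ (p : ℕ) (B : Fin (p + 2) → ℝ) (s : ℝ) :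
    Fint (p + 1) B s
      = ∫ t in Set.Icc (0:ℝ) s,
          Real.exp (-(t * B 1)) *
            Fint p (fun k => B ((1 : Fin (p + 2)).succAbove k)) (s - t) := by
  set B' : Fin (p + 1) → ℝ := fun k => B ((1 : Fin (p + 2)).succAbove k) with hB'
  set f : (Fin (p + 1) → ℝ) → ℝ := fun c =>
    Real.exp (-((s - ∑ k, c k) * B 0 + ∑ k : Fin (p + 1), c k * B k.succ)) with hf
  have hfc : Continuous f := by
    apply Real.continuous_exp.comp
    fun_prop
  have hmeas := measurableSet_Tset (p + 1) s
  have hInt : Integrable ((Tset (p + 1) s).indicator f) := by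
    rw [integrable_indicator_iff hmeas]
    exact hfc.continuousOn.integrableOn_compact (isCompact_Tset _ _)
  rw [Fint, ← integral_indicator hmeas]
  have hmp := (measurePreserving_piFinSuccAbove
    (fun _ : Fin (p + 1) => (volume : Measure ℝ)) 0).symm
  rw [show (volume : Measure (Fin (p + 1) → ℝ)) = Measure.pi (fun _ => volume)
    from volume_pi]
  rw [← hmp.integral_comp' ((Tset (p + 1) s).indicator f)]
  have hInt2 : Integrable (fun x : ℝ × (Fin p → ℝ) =>
      (Tset (p + 1) s).indicator f
        ((MeasurableEquiv.piFinSuccAbove (fun _ : Fin (p + 1) => ℝ) 0).symm x))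
      (volume.prod (Measure.pi fun _ => volume)) := by
    exact (hmp.integrable_comp_emb (MeasurableEquiv.measurableEmbedding _)).mpr
      (by rw [← volume_pi] at *; exact hInt)
  rw [MeasureTheory.integral_prod _ hInt2]
  have hcons : ∀ (t : ℝ) (c : Fin p → ℝ),
      (MeasurableEquiv.piFinSuccAbove (fun _ : Fin (p + 1) => ℝ) 0).symm (t, c)
        = Fin.cons t c := by
    intro t c
    simp [MeasurableEquiv.piFinSuccAbove, Fin.insertNthEquiv, Fin.insertNth_zero']
  have hmem : ∀ (t : ℝ) (c : Fin p → ℝ),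
      (Fin.cons t c ∈ Tset (p + 1) s) ↔ (0 ≤ t ∧ c ∈ Tset p (s - t)) := by
    intro t c
    simp only [Tset, Set.mem_setOf_eq, Fin.forall_fin_succ, Fin.cons_zero, Fin.cons_succ,
      Fin.sum_cons]
    constructor
    · rintro ⟨⟨h0, h1⟩, h2⟩; exact ⟨h0, h1, by linarith⟩
    · rintro ⟨h0, h1, h2⟩; exact ⟨⟨h0, h1⟩, by linarith⟩
  have hval : ∀ (t : ℝ) (c : Fin p → ℝ),
      f (Fin.cons t c) = Real.exp (-(t * B 1)) *
        Real.exp (-((s - t - ∑ k, c k) * B' 0 + ∑ k : Fin p, c k * B' k.succ)) := by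
    intro t c
    rw [← Real.exp_add, hf]
    simp only []
    congr 1
    rw [Fin.sum_cons, Fin.sum_univ_succ]
    simp only [Fin.cons_zero, Fin.cons_succ, hB', sa_zero, sa_succ, Fin.succ_zero_eq_one]
    ring
  have key : ∀ t : ℝ,
      (∫ c, (Tset (p + 1) s).indicator f
        ((MeasurableEquiv.piFinSuccAbove (fun _ : Fin (p + 1) => ℝ) 0).symm (t, c))
        ∂(Measure.pi fun _ => (volume : Measure ℝ)))
      = Set.indicator (Set.Icc (0:ℝ) s)
          (fun t => Real.exp (-(t * B 1)) * Fint p B' (s - t)) t := by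
    intro t
    by_cases ht : 0 ≤ t
    · have hfun : (fun c : Fin p → ℝ => (Tset (p + 1) s).indicator f
          ((MeasurableEquiv.piFinSuccAbove (fun _ : Fin (p + 1) => ℝ) 0).symm (t, c)))
          = (Tset p (s - t)).indicator
              (fun c => Real.exp (-(t * B 1)) *
                Real.exp (-((s - t - ∑ k, c k) * B' 0 + ∑ k : Fin p, c k * B' k.succ))) := by
        funext c
        rw [hcons]
        by_cases hc : c ∈ Tset p (s - t)
        · rw [Set.indicator_of_mem ((hmem t c).mpr ⟨ht, hc⟩), Set.indicator_of_mem hc, hval]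
        · rw [Set.indicator_of_notMem (fun h => hc ((hmem t c).mp h).2),
            Set.indicator_of_notMem hc]
      rw [hfun, ← volume_pi, integral_indicator (measurableSet_Tset p (s - t)),
        integral_const_mul]
      have hFi : (∫ (a : Fin p → ℝ) in Tset p (s - t),
          Real.exp (-((s - t - ∑ k : Fin p, a k) * B' 0 + ∑ k : Fin p, a k * B' k.succ)))
          = Fint p B' (s - t) := rfl
      rw [hFi]
      by_cases hts : t ≤ s
      · rw [Set.indicator_of_mem (Set.mem_Icc.mpr ⟨ht, hts⟩)]
      · rw [Set.indicator_of_notMem (by simp [Set.mem_Icc, hts]),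
          Fint_neg p B' (by linarith), mul_zero]
    · have hfun : (fun c : Fin p → ℝ => (Tset (p + 1) s).indicator f
          ((MeasurableEquiv.piFinSuccAbove (fun _ : Fin (p + 1) => ℝ) 0).symm (t, c)))
          = fun _ => 0 := by
        funext c
        rw [hcons]
        exact Set.indicator_of_notMem (fun h => ht ((hmem t c).mp h).1) f
      rw [hfun, integral_zero, Set.indicator_of_notMem (by simp [Set.mem_Icc, ht])]
  rw [show (fun t : ℝ => ∫ c, (Tset (p + 1) s).indicator f
        ((MeasurableEquiv.piFinSuccAbove (fun _ : Fin (p + 1) => ℝ) 0).symm (t, c))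
        ∂(Measure.pi fun _ => (volume : Measure ℝ)))
      = Set.indicator (Set.Icc (0:ℝ) s)
          (fun t => Real.exp (-(t * B 1)) * Fint p B' (s - t)) from funext key]
  rw [integral_indicator measurableSet_Icc]

lemma calc_F (p : ℕ) : ∀ (B : Fin (p + 1) → ℝ),
    (∀ j k : Fin (p + 1), j ≠ k → B k - B j ≠ 0) → ∀ s : ℝ,
    Fint p B s = if 0 ≤ s then RHSsum p B s else 0 := by
  induction p with
  | zero =>
    intro B hB s
    by_cases hs : 0 ≤ s
    · rw [if_pos hs, Fint_zero_case B hs, RHSsum]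
      simp
    · rw [if_neg hs, Fint_neg 0 B (lt_of_not_ge hs)]
  | succ p ih =>
    intro B hB s
    by_cases hs : 0 ≤ s
    swap
    · rw [if_neg hs, Fint_neg _ B (lt_of_not_ge hs)]
    rw [if_pos hs, Fint_succ p B s]
    set σ : Fin (p + 1) → Fin (p + 2) := (1 : Fin (p + 2)).succAbove with hσ
    set B' : Fin (p + 1) → ℝ := fun k => B (σ k) with hB'
    have hB'h : ∀ j k : Fin (p + 1), j ≠ k → B' k - B' j ≠ 0 :=
      fun j k h => hB (σ j) (σ k) (fun e => h (Fin.succAbove_right_injective e))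
    have hc : ∀ j : Fin (p + 1), B' j - B 1 ≠ 0 :=
      fun j => hB 1 (σ j) (Ne.symm (Fin.succAbove_ne 1 j))
    have hD : ∀ j : Fin (p + 1), (∏ k ∈ univ.erase j, (B' k - B' j)) ≠ 0 := by
      intro j
      refine Finset.prod_ne_zero_iff.mpr fun k hk => hB'h j k ?_
      exact fun e => (Finset.ne_of_mem_erase hk) e.symm
    have hIcc : Set.EqOn (fun t => Real.exp (-(t * B 1)) * Fint p B' (s - t))
        (fun t => ∑ j : Fin (p + 1),
          (Real.exp (-(s * B' j)) / ∏ k ∈ univ.erase j, (B' k - B' j)) *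
            Real.exp ((B' j - B 1) * t)) (Set.Icc (0:ℝ) s) := by
      intro t ht
      simp only []
      rw [ih B' hB'h (s - t), if_pos (by linarith [ht.2] : (0:ℝ) ≤ s - t), RHSsum,
        Finset.mul_sum]
      refine Finset.sum_congr rfl fun j _ => ?_
      rw [← mul_div_assoc, div_mul_eq_mul_div, ← Real.exp_add, ← Real.exp_add]
      congr 2
      ring
    rw [setIntegral_congr_fun measurableSet_Icc hIcc, integral_Icc_eq_integral_Ioc,
      ← intervalIntegral.integral_of_le hs]
    rw [intervalIntegral.integral_finset_sum (fun j _ =>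
      (Continuous.intervalIntegrable (by fun_prop) 0 s))]
    rw [← rhs_rec p B hB s]
    refine Finset.sum_congr rfl fun j _ => ?_
    rw [intervalIntegral.integral_const_mul, exp_integral _ (hc j) s]
    rw [show Real.exp (-(s * B 1)) = Real.exp (-(s * B' j)) * Real.exp ((B' j - B 1) * s) by
      rw [← Real.exp_add]; congr 1; ring]
    field_simp
    ring

theorem fourier_transform_of_Dmeas {I : Type*} (d : ℕ) (hd : 1 ≤ d)
    (α : I → Fin d → ℝ) (p : ℕ) (i : Fin p → I) (x : Fin d → ℝ)
    (hx : ∀ j k : Fin (p + 1), j ≠ k →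
      (∑ t, (beta α i k t - beta α i j t) * x t) ≠ 0) :
    ∫ y, Real.exp (∑ t, y t * x t) ∂(Dmeas α i) =
      ∑ j : Fin (p + 1),
        Real.exp (-∑ t, beta α i j t * x t) /
          ∏ k ∈ Finset.univ.erase j, (∑ t, (beta α i k t - beta α i j t) * x t) := by
  set b : Fin (p + 1) → ℝ := fun j => ∑ t, beta α i j t * x t with hb
  have hdiff : ∀ j k : Fin (p + 1),
      b k - b j = ∑ t, (beta α i k t - beta α i j t) * x t := by
    intro j k
    rw [hb]
    simp only []
    rw [← Finset.sum_sub_distrib]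
    exact Finset.sum_congr rfl fun t _ => by ring
  have hB : ∀ j k : Fin (p + 1), j ≠ k → b k - b j ≠ 0 := by
    intro j k hjk
    rw [hdiff]
    exact hx j k hjk
  have hπ : Continuous (fun c : Fin (p + 1) → ℝ => -∑ k : Fin (p + 1), c k • beta α i k) := by
    fun_prop
  have hcons : Continuous (fun c : Fin p → ℝ => Fin.cons (1 - ∑ k, c k) c :
      (Fin p → ℝ) → (Fin (p + 1) → ℝ)) := by
    apply continuous_pi
    intro k
    induction k using Fin.cases with
    | zero => simpa using (by fun_prop : Continuous
        (fun c : Fin p → ℝ => 1 - ∑ k, c k))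
    | succ j => simpa using continuous_apply j
  have hg : Continuous (fun y : Fin d → ℝ => Real.exp (∑ t, y t * x t)) := by fun_prop
  have hgπ : Continuous (fun y : Fin (p + 1) → ℝ =>
      Real.exp (∑ t, (-∑ k : Fin (p + 1), y k • beta α i k) t * x t)) := hg.comp hπ
  rw [Dmeas, integral_map hπ.aemeasurable hg.aestronglyMeasurable, simplexMeasure,
    integral_map hcons.aemeasurable hgπ.aestronglyMeasurable]
  have hexp : ∀ c : Fin p → ℝ,
      Real.exp (∑ t, (-∑ k : Fin (p + 1), (Fin.cons (1 - ∑ k, c k) c : Fin (p+1) → ℝ) k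
          • beta α i k) t * x t)
      = Real.exp (-((1 - ∑ k, c k) * b 0 + ∑ k : Fin p, c k * b k.succ)) := by
    intro c
    congr 1
    have h1 : ∀ t, (-∑ k : Fin (p + 1), (Fin.cons (1 - ∑ k, c k) c : Fin (p+1) → ℝ) k
        • beta α i k) t = -∑ k : Fin (p + 1), (Fin.cons (1 - ∑ k, c k) c : Fin (p+1) → ℝ) k
        * beta α i k t := by
      intro t
      simp [Finset.sum_apply]
    rw [Finset.sum_congr rfl fun t _ => by rw [h1 t]]
    have h2 : ∑ t, (-∑ k : Fin (p + 1), (Fin.cons (1 - ∑ k, c k) c : Fin (p+1) → ℝ) k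
        * beta α i k t) * x t
        = -∑ k : Fin (p + 1), (Fin.cons (1 - ∑ k, c k) c : Fin (p+1) → ℝ) k * b k := by
      calc ∑ t, (-∑ k : Fin (p + 1), (Fin.cons (1 - ∑ k, c k) c : Fin (p+1) → ℝ) k
            * beta α i k t) * x t
          = -∑ t, ∑ k : Fin (p + 1), ((Fin.cons (1 - ∑ k, c k) c : Fin (p+1) → ℝ) k
            * beta α i k t) * x t := by
            rw [← Finset.sum_neg_distrib]
            exact Finset.sum_congr rfl fun t _ => by rw [neg_mul, Finset.sum_mul]
        _ = -∑ k : Fin (p + 1), ∑ t, ((Fin.cons (1 - ∑ k, c k) c : Fin (p+1) → ℝ) k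
            * beta α i k t) * x t := by rw [Finset.sum_comm]
        _ = -∑ k : Fin (p + 1), (Fin.cons (1 - ∑ k, c k) c : Fin (p+1) → ℝ) k * b k := by
            refine congrArg Neg.neg (Finset.sum_congr rfl fun k _ => ?_)
            rw [hb]
            simp only []
            rw [Finset.mul_sum]
            exact Finset.sum_congr rfl fun t _ => by ring
    rw [h2, Fin.sum_univ_succ]
    simp only [Fin.cons_zero, Fin.cons_succ]
  rw [show (fun c : Fin p → ℝ => Real.exp (∑ t, (-∑ k : Fin (p + 1),
      (Fin.cons (1 - ∑ k, c k) c : Fin (p+1) → ℝ) k • beta α i k) t * x t))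
      = fun c : Fin p → ℝ => Real.exp (-((1 - ∑ k, c k) * b 0 + ∑ k : Fin p, c k * b k.succ))
    from funext hexp]
  have hF : (∫ c in Tset p 1, Real.exp (-((1 - ∑ k, c k) * b 0
      + ∑ k : Fin p, c k * b k.succ))) = Fint p b 1 := by
    rw [Fint]
  rw [show {c : Fin p → ℝ | (∀ k, 0 ≤ c k) ∧ ∑ k, c k ≤ 1} = Tset p 1 from rfl, hF,
    calc_F p b hB 1, if_pos (by norm_num : (0:ℝ) ≤ 1), RHSsum]
  refine Finset.sum_congr rfl fun j _ => ?_
  rw [one_mul]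
  congr 1
  exact Finset.prod_congr rfl fun k _ => hdiff j k
end

section
/- Let n be a natural number and let M be an n × n matrix over ℂ (or over any nontrivial ring) that is upper unitriangular, i.e. M_{ii} = 1 for all i and M_{ij} = 0 whenever i > j. Let σ and τ be permutations of {1,…,n}, and suppose that the matrix P_σ M P_τ^{-1} is upper triangular, i.e. M_{σ^{-1}(i), τ^{-1}(j)} = 0 whenever i > j. Then σ = τ. -/
/-!
The diagonal entry `M k k = 1` sits at position `(σ k, τ k)` of `P_σ M P_τ⁻¹`, so upper
triangularity of the conjugate forces `σ k ≤ τ k` for every `k`. The permutation `σ τ⁻¹` then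
moves no element upwards, and on a finite (or just well-founded) order such a permutation is the
identity.
-/

open Function

theorem Function.Injective.eq_id_of_forall_apply_le {α : Type*} [PartialOrder α] [WellFoundedLT α]
    {f : α → α} (hf : Injective f) (hle : ∀ x, f x ≤ x) : f = id := by
  funext x
  induction x using WellFoundedLT.induction with
  | _ x ih =>
    refine (hle x).eq_or_lt.elim id fun hlt => ?_
    -- `f x < x` is fixed by the induction hypothesis, so `f (f x) = f x` contradicts injectivity.
    exact (hlt.ne (hf (ih (f x) hlt))).elim

theorem Equiv.Perm.eq_of_forall_apply_le {α : Type*} [PartialOrder α] [WellFoundedLT α]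
    {σ τ : Equiv.Perm α} (hle : ∀ x, σ x ≤ τ x) : σ = τ := by
  have hid : ⇑(σ * τ⁻¹) = id :=
    (σ * τ⁻¹).injective.eq_id_of_forall_apply_le fun y => by simpa using hle (τ⁻¹ y)
  ext x
  simpa using congrFun hid (τ x)

theorem perm_eq_of_unitriangular_conjugate_upper_triangular_general
    (n : ℕ) (R : Type*) [Ring R] [Nontrivial R]
    (M : Matrix (Fin n) (Fin n) R)
    (hdiag : ∀ i, M i i = 1)
    (σ τ : Equiv.Perm (Fin n))
    (h : ∀ i j : Fin n, j < i → M (σ⁻¹ i) (τ⁻¹ j) = 0) :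
    σ = τ := by
  refine Equiv.Perm.eq_of_forall_apply_le fun k => not_lt.mp fun hlt => ?_
  have hzero : M k k = 0 := by simpa using h (σ k) (τ k) hlt
  exact one_ne_zero (hdiag k ▸ hzero)

theorem perm_eq_of_unitriangular_conjugate_upper_triangular
    (n : ℕ) (R : Type*) [Ring R] [Nontrivial R]
    (M : Matrix (Fin n) (Fin n) R)
    (hdiag : ∀ i, M i i = 1)
    (hupper : ∀ i j : Fin n, j < i → M i j = 0)
    (σ τ : Equiv.Perm (Fin n))
    (h : ∀ i j : Fin n, j < i → M (σ⁻¹ i) (τ⁻¹ j) = 0) :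
    σ = τ :=
  perm_eq_of_unitriangular_conjugate_upper_triangular_general n R M hdiag σ τ h
end

section
/- Let d ≥ 1 be an integer, c a real number, and (a_m)_{m ≥ 0} a sequence of real numbers such that a_m / m^{d-1} converges to c/(d−1)! as m → ∞. Then for every positive integer n the series ∑_{m=0}^∞ a_m e^{−m/n} converges absolutely, and lim_{n → ∞} (1/n^d) ∑_{m=0}^∞ a_m e^{−m/n} = c, the limit being taken over positive integers n. -/
open Filter

private lemma choose_cast_eq (k m : ℕ) :
    (((m + k).choose k : ℕ) : ℝ) * (k.factorial : ℝ) =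
      ∏ i ∈ Finset.range k, ((m : ℝ) + ((k - i : ℕ) : ℝ)) := by
  rw [mul_comm, ← Nat.cast_mul, ← Nat.descFactorial_eq_factorial_mul_choose,
    Nat.descFactorial_eq_prod_range, Nat.cast_prod]
  refine Finset.prod_congr rfl fun i hi => ?_
  have : m + k - i = m + (k - i) := by
    have := Finset.mem_range.1 hi; omega
  rw [this, Nat.cast_add]

private lemma choose_div_pow_tendsto (k : ℕ) :
    Tendsto (fun m : ℕ => (((m + k).choose k : ℕ) : ℝ) / (m : ℝ) ^ k) atTop
      (nhds (1 / (k.factorial : ℝ))) := by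
  have hfac : (0:ℝ) < (k.factorial : ℝ) := by positivity
  have hprod : Tendsto (fun m : ℕ => ∏ i ∈ Finset.range k,
      (1 + ((k - i : ℕ) : ℝ) / (m : ℝ))) atTop (nhds 1) := by
    have h1 : ∀ i : ℕ, Tendsto (fun m : ℕ => 1 + ((k - i : ℕ) : ℝ) / (m : ℝ)) atTop (nhds 1) := by
      intro i
      have : Tendsto (fun m : ℕ => ((k - i : ℕ) : ℝ) / (m : ℝ)) atTop (nhds 0) :=
        Tendsto.div_atTop tendsto_const_nhds tendsto_natCast_atTop_atTop
      simpa using tendsto_const_nhds.add this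
    have := tendsto_finset_prod (f := fun i (m : ℕ) => 1 + ((k - i : ℕ) : ℝ) / (m : ℝ))
      (x := atTop) (a := fun _ => 1) (Finset.range k) (fun i _ => h1 i)
    simpa using this
  have := hprod.const_mul (1 / (k.factorial : ℝ))
  rw [mul_one] at this
  refine this.congr' ?_
  filter_upwards [eventually_ge_atTop 1] with m hm
  have hm0 : (m : ℝ) ≠ 0 := by positivity
  have hchoose := choose_cast_eq k m
  have : ∏ i ∈ Finset.range k, (1 + ((k - i : ℕ) : ℝ) / (m : ℝ))
      = (∏ i ∈ Finset.range k, ((m : ℝ) + ((k - i : ℕ) : ℝ))) / (m : ℝ) ^ k := by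
    rw [show ((m:ℝ))^k = ∏ _i ∈ Finset.range k, (m:ℝ) by simp, ← Finset.prod_div_distrib]
    refine Finset.prod_congr rfl fun i _ => ?_
    field_simp
  rw [this, ← hchoose]
  field_simp

private lemma n_one_sub_exp : Tendsto (fun n : ℕ => (n : ℝ) * (1 - Real.exp (-(1 : ℝ) / n)))
    atTop (nhds 1) := by
  have hslope : Tendsto (slope Real.exp 0) (nhdsWithin 0 {(0:ℝ)}ᶜ) (nhds 1) := by
    have := Real.hasDerivAt_exp 0
    rw [hasDerivAt_iff_tendsto_slope] at this
    simpa using this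
  have hseq : Tendsto (fun n : ℕ => -(1 : ℝ) / n) atTop (nhdsWithin 0 {(0:ℝ)}ᶜ) := by
    apply tendsto_nhdsWithin_of_tendsto_nhds_of_eventually_within
    · have : Tendsto (fun n : ℕ => (1 : ℝ) / n) atTop (nhds 0) :=
        tendsto_one_div_atTop_nhds_zero_nat
      simpa [neg_div] using this.neg
    · filter_upwards [eventually_ge_atTop 1] with n hn
      have : (0:ℝ) < n := by exact_mod_cast hn
      simp only [Set.mem_compl_iff, Set.mem_singleton_iff]
      intro h
      rw [div_eq_zero_iff] at h
      rcases h with h | h <;> [norm_num at h; exact this.ne' h]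
  have := hslope.comp hseq
  refine this.congr' ?_
  filter_upwards [eventually_ge_atTop 1] with n hn
  have hn0 : (n:ℝ) ≠ 0 := by positivity
  simp only [Function.comp_apply, slope_def_field, Real.exp_zero]
  field_simp
  ring

private lemma summable_weight (k : ℕ) {r : ℝ} (h0 : 0 ≤ r) (h1 : r < 1) :
    Summable (fun m : ℕ => (((m + k).choose k : ℕ) : ℝ) * r ^ m) := by
  have : ‖r‖ < 1 := by rw [Real.norm_eq_abs, abs_of_nonneg h0]; exact h1
  exact summable_choose_mul_geometric_of_norm_lt_one k this

private lemma hasSum_weight (k : ℕ) {r : ℝ} (h0 : 0 ≤ r) (h1 : r < 1) :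
    HasSum (fun m : ℕ => (((m + k).choose k : ℕ) : ℝ) * r ^ m) (1 / (1 - r) ^ (k + 1)) := by
  have : ‖r‖ < 1 := by rw [Real.norm_eq_abs, abs_of_nonneg h0]; exact h1
  exact hasSum_choose_mul_geometric_of_norm_lt_one k this

private lemma tail_est (k : ℕ) {r : ℝ} (h0 : 0 ≤ r) (h1 : r < 1) (e : ℕ → ℝ) (M : ℕ)
    {ε : ℝ} (hε : 0 ≤ ε) (he : ∀ m, M ≤ m → |e m| ≤ ε)
    (hs : Summable (fun m : ℕ => e m * ((((m + k).choose k : ℕ) : ℝ) * r ^ m))) :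
    |∑' m : ℕ, e m * ((((m + k).choose k : ℕ) : ℝ) * r ^ m)| ≤
      (∑ m ∈ Finset.range M, |e m| * (((m + k).choose k : ℕ) : ℝ))
        + ε * (1 / (1 - r) ^ (k + 1)) := by
  set f : ℕ → ℝ := fun m => e m * ((((m + k).choose k : ℕ) : ℝ) * r ^ m) with hf
  set g : ℕ → ℝ := fun m => (((m + k).choose k : ℕ) : ℝ) * r ^ m with hg
  have hgnn : ∀ m, 0 ≤ g m := fun m => by positivity
  have hgs : Summable g := summable_weight k h0 h1
  have habs : Summable (fun m => |f m|) := hs.abs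
  have split := Summable.sum_add_tsum_nat_add M hs
  rw [← split]
  have htail : |∑' m : ℕ, f (m + M)| ≤ ε * (1 / (1 - r) ^ (k + 1)) := by
    have h1' : |∑' m : ℕ, f (m + M)| ≤ ∑' m : ℕ, |f (m + M)| := by
      simpa using norm_tsum_le_tsum_norm (f := fun m => f (m + M))
        (by simpa using (summable_nat_add_iff M).2 habs)
    have h2' : ∑' m : ℕ, |f (m + M)| ≤ ∑' m : ℕ, ε * g (m + M) := by
      refine Summable.tsum_le_tsum (fun m => ?_) ((summable_nat_add_iff M).2 habs)
        (((summable_nat_add_iff M).2 hgs).mul_left ε)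
      have : |f (m + M)| = |e (m + M)| * g (m + M) := by
        rw [hf, hg]; simp [abs_mul, abs_of_nonneg h0, abs_of_nonneg (hgnn (m+M)),
          abs_mul, abs_pow]
      rw [this]
      exact mul_le_mul_of_nonneg_right (he _ (by omega)) (hgnn _)
    have h3' : ∑' m : ℕ, g (m + M) ≤ ∑' m, g m := by
      have := Summable.sum_add_tsum_nat_add M hgs
      have hhead : 0 ≤ ∑ m ∈ Finset.range M, g m := Finset.sum_nonneg fun m _ => hgnn m
      linarith
    have h4' : ∑' m, g m = 1 / (1 - r) ^ (k + 1) := (hasSum_weight k h0 h1).tsum_eq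
    calc |∑' m : ℕ, f (m + M)| ≤ ∑' m : ℕ, |f (m + M)| := h1'
      _ ≤ ∑' m : ℕ, ε * g (m + M) := h2'
      _ = ε * ∑' m : ℕ, g (m + M) := by rw [tsum_mul_left]
      _ ≤ ε * (1 / (1 - r) ^ (k + 1)) := by
          rw [← h4']; exact mul_le_mul_of_nonneg_left h3' hε
  have hhead : |∑ m ∈ Finset.range M, f m| ≤
      ∑ m ∈ Finset.range M, |e m| * (((m + k).choose k : ℕ) : ℝ) := by
    refine (Finset.abs_sum_le_sum_abs _ _).trans (Finset.sum_le_sum fun m _ => ?_)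
    rw [hf]
    simp only [abs_mul, abs_pow, abs_of_nonneg h0]
    have h1'' : |(((m + k).choose k : ℕ) : ℝ)| = (((m + k).choose k : ℕ) : ℝ) :=
      abs_of_nonneg (by positivity)
    rw [h1'']
    have hrm : r ^ m ≤ 1 := pow_le_one₀ h0 h1.le
    exact mul_le_mul_of_nonneg_left (mul_le_of_le_one_right (by positivity) hrm) (abs_nonneg _)
  calc |(∑ m ∈ Finset.range M, f m) + ∑' m : ℕ, f (m + M)|
      ≤ |∑ m ∈ Finset.range M, f m| + |∑' m : ℕ, f (m + M)| := abs_add_le _ _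
    _ ≤ _ := add_le_add hhead htail

theorem limit_of_exponential_sums
    (d : ℕ) (hd : 1 ≤ d) (c : ℝ) (a : ℕ → ℝ)
    (ha : Tendsto (fun m : ℕ => a m / (m : ℝ) ^ (d - 1)) atTop
      (nhds (c / (Nat.factorial (d - 1) : ℝ)))) :
    (∀ n : ℕ, 0 < n →
      Summable (fun m : ℕ => |a m * Real.exp (-(m : ℝ) / (n : ℝ))|)) ∧
    Tendsto
      (fun n : ℕ => (1 / (n : ℝ) ^ d) * ∑' m : ℕ, a m * Real.exp (-(m : ℝ) / (n : ℝ)))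
      atTop (nhds c) := by
  obtain ⟨k, rfl⟩ : ∃ k, d = k + 1 := ⟨d - 1, by omega⟩
  simp only [Nat.add_sub_cancel] at ha
  set p : ℕ → ℝ := fun m => (((m + k).choose k : ℕ) : ℝ) with hp
  have hp_pos : ∀ m, 0 < p m := by
    intro m
    have h : 0 < (m + k).choose k := Nat.choose_pos (by omega)
    show (0:ℝ) < (((m + k).choose k : ℕ) : ℝ)
    exact_mod_cast h
  -- a m / p m → c
  have hap : Tendsto (fun m : ℕ => a m / p m) atTop (nhds c) := by
    have hpd := choose_div_pow_tendsto k
    have hk : (1 / (k.factorial : ℝ)) ≠ 0 := by positivity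
    have hmain := ha.div hpd hk
    have hlim : (c / (k.factorial : ℝ)) / (1 / (k.factorial : ℝ)) = c := by
      field_simp
    rw [hlim] at hmain
    refine hmain.congr' ?_
    filter_upwards [eventually_ge_atTop 1] with m hm
    have hm0 : ((m : ℝ)) ^ k ≠ 0 := by
      have : (0:ℝ) < m := by exact_mod_cast hm
      positivity
    have hpm : p m ≠ 0 := (hp_pos m).ne'
    show a m / (m:ℝ)^k / (p m / (m:ℝ)^k) = a m / p m
    field_simp
  -- uniform bound |a m| ≤ K * p m
  obtain ⟨K, hKmem⟩ : BddAbove (Set.range fun m => |a m / p m|) :=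
    (hap.abs).bddAbove_range
  have hKm : ∀ m, |a m / p m| ≤ K := fun m => hKmem ⟨m, rfl⟩
  have hK0 : 0 ≤ K := le_trans (abs_nonneg _) (hKm 0)
  have haK : ∀ m, |a m| ≤ K * p m := by
    intro m
    have := hKm m
    rw [abs_div, abs_of_pos (hp_pos m)] at this
    rw [div_le_iff₀ (hp_pos m)] at this
    exact this
  -- exponentials as powers
  have hxm : ∀ n m : ℕ, Real.exp (-(m : ℝ) / n) = (Real.exp (-(1:ℝ) / n)) ^ m := by
    intro n m
    rw [← Real.exp_nat_mul]
    congr 1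
    ring
  -- summability (part 1)
  have hsum : ∀ n : ℕ, 0 < n → Summable (fun m : ℕ => |a m * Real.exp (-(m : ℝ) / n)|) := by
    intro n hn
    set r : ℝ := Real.exp (-(1:ℝ) / n) with hr
    have h0 : 0 ≤ r := (Real.exp_pos _).le
    have h1 : r < 1 := by
      apply Real.exp_lt_one_iff.2
      have : (0:ℝ) < n := by exact_mod_cast hn
      rw [neg_div]
      simpa using by positivity
    refine Summable.of_nonneg_of_le (fun m => abs_nonneg _) (fun m => ?_)
      ((summable_weight k h0 h1).mul_left K)
    rw [hxm n m, abs_mul, abs_pow, abs_of_nonneg h0]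
    calc |a m| * r ^ m ≤ (K * p m) * r ^ m :=
          mul_le_mul_of_nonneg_right (haK m) (by positivity)
      _ = K * (p m * r ^ m) := by ring
  refine ⟨hsum, ?_⟩
  -- part 2
  set e : ℕ → ℝ := fun m => a m / p m - c with he
  have he0 : Tendsto e atTop (nhds 0) := by
    simpa using hap.sub_const c
  have hepa : ∀ m, e m * p m = a m - c * p m := by
    intro m
    have hpm : p m ≠ 0 := (hp_pos m).ne'
    rw [he]
    field_simp
  set x : ℕ → ℝ := fun n => Real.exp (-(1:ℝ) / n) with hx
  -- for n ≥ 1 basic facts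
  have hx0 : ∀ n : ℕ, 0 ≤ x n := fun n => (Real.exp_pos _).le
  have hx1 : ∀ n : ℕ, 1 ≤ n → x n < 1 := by
    intro n hn
    apply Real.exp_lt_one_iff.2
    have : (0:ℝ) < n := by exact_mod_cast hn
    rw [neg_div]
    simpa using by positivity
  have hSa : ∀ n : ℕ, 1 ≤ n → Summable (fun m : ℕ => a m * (x n) ^ m) := by
    intro n hn
    have := hsum n hn
    rw [summable_abs_iff] at this
    refine this.congr fun m => ?_
    rw [hxm n m]
  have hSe : ∀ n : ℕ, 1 ≤ n → Summable (fun m : ℕ => e m * (p m * (x n) ^ m)) := by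
    intro n hn
    have h1 : Summable (fun m => c * (p m * (x n) ^ m)) :=
      (summable_weight k (hx0 n) (hx1 n hn)).mul_left c
    refine ((hSa n hn).sub h1).congr fun m => ?_
    have h2 := hepa m
    have : e m * (p m * x n ^ m) = (e m * p m) * x n ^ m := by ring
    rw [this, h2]
    ring
  -- decomposition of the sum for n ≥ 1
  have hdecomp : ∀ n : ℕ, 1 ≤ n →
      (∑' m : ℕ, a m * (x n) ^ m) =
        c * (1 / (1 - x n) ^ (k + 1)) + ∑' m : ℕ, e m * (p m * (x n) ^ m) := by
    intro n hn
    have hW := hasSum_weight k (hx0 n) (hx1 n hn)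
    have h1 : HasSum (fun m => c * (p m * (x n) ^ m)) (c * (1 / (1 - x n) ^ (k + 1))) :=
      hW.mul_left c
    have h2 := h1.add (hSe n hn).hasSum
    have h3 : (fun m => c * (p m * (x n) ^ m) + e m * (p m * (x n) ^ m))
        = fun m => a m * (x n) ^ m := by
      funext m
      have h4 : e m * (p m * x n ^ m) = (e m * p m) * x n ^ m := by ring
      rw [h4, hepa m]
      ring
    rw [h3] at h2
    exact h2.tsum_eq
  -- (1/n^(k+1)) * (1/(1-x n)^(k+1)) → 1
  have hv : Tendsto (fun n : ℕ => (1 / (n:ℝ) ^ (k+1)) * (1 / (1 - x n) ^ (k+1)))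
      atTop (nhds 1) := by
    have hu := n_one_sub_exp
    have h2 : Tendsto (fun n : ℕ => (((n:ℝ) * (1 - x n))⁻¹) ^ (k+1)) atTop (nhds 1) := by
      have := (hu.inv₀ one_ne_zero).pow (k+1)
      simpa using this
    refine h2.congr fun n => ?_
    rw [mul_inv, mul_pow, one_div, one_div, inv_pow, inv_pow]
  -- the error term tends to 0
  have hG : Tendsto (fun n : ℕ => (1 / (n:ℝ) ^ (k+1)) * ∑' m : ℕ, e m * (p m * (x n) ^ m))
      atTop (nhds 0) := by
    rw [NormedAddCommGroup.tendsto_nhds_zero]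
    intro ε hε
    obtain ⟨M, hM⟩ := (Metric.tendsto_atTop.1 he0) (ε/4) (by positivity)
    have hM' : ∀ m, M ≤ m → |e m| ≤ ε/4 := by
      intro m hm
      have := hM m hm
      rw [Real.dist_eq, sub_zero] at this
      exact this.le
    set C := ∑ m ∈ Finset.range M, |e m| * p m with hC
    have hCt : Tendsto (fun n : ℕ => (1 / (n:ℝ) ^ (k+1)) * C) atTop (nhds 0) := by
      have h1 : Tendsto (fun n : ℕ => ((n:ℝ) ^ (k+1))) atTop atTop :=
        (tendsto_pow_atTop (Nat.succ_ne_zero k)).comp tendsto_natCast_atTop_atTop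
      have h2 := h1.inv_tendsto_atTop.mul_const C
      rw [zero_mul] at h2
      simpa [one_div] using h2
    have hev1 := hCt.eventually_lt_const (show (0:ℝ) < ε/4 by positivity)
    have hev2 := hv.eventually_le_const (show (1:ℝ) < 2 by norm_num)
    filter_upwards [hev1, hev2, eventually_ge_atTop 1] with n h1n h2n h3n
    have h0 := hx0 n
    have h1' := hx1 n h3n
    have hb := tail_est k h0 h1' e M (by positivity : (0:ℝ) ≤ ε/4) hM' (hSe n h3n)
    have hn1 : (0:ℝ) ≤ 1 / (n:ℝ)^(k+1) := by positivity
    rw [Real.norm_eq_abs, abs_mul, abs_of_nonneg hn1]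
    have hstep : 1 / (n:ℝ)^(k+1) * |∑' m : ℕ, e m * (p m * (x n) ^ m)|
        ≤ 1 / (n:ℝ)^(k+1) * (C + (ε/4) * (1 / (1 - x n) ^ (k+1))) :=
      mul_le_mul_of_nonneg_left hb hn1
    have heq : 1 / (n:ℝ)^(k+1) * (C + (ε/4) * (1 / (1 - x n) ^ (k+1)))
        = 1 / (n:ℝ)^(k+1) * C
          + (ε/4) * (1 / (n:ℝ)^(k+1) * (1 / (1 - x n) ^ (k+1))) := by ring
    have hfin : (ε/4) * (1 / (n:ℝ)^(k+1) * (1 / (1 - x n) ^ (k+1))) ≤ (ε/4) * 2 :=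
      mul_le_mul_of_nonneg_left h2n (by positivity)
    calc 1 / (n:ℝ)^(k+1) * |∑' m : ℕ, e m * (p m * (x n) ^ m)|
        ≤ 1 / (n:ℝ)^(k+1) * (C + (ε/4) * (1 / (1 - x n) ^ (k+1))) := hstep
      _ = 1 / (n:ℝ)^(k+1) * C
          + (ε/4) * (1 / (n:ℝ)^(k+1) * (1 / (1 - x n) ^ (k+1))) := heq
      _ < ε/4 + (ε/4) * 2 := by
          exact add_lt_add_of_lt_of_le h1n hfin
      _ < ε := by linarith
  -- assemble
  have hfinal := (hv.const_mul c).add hG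
  rw [mul_one, add_zero] at hfinal
  have hrw : (fun n : ℕ => (1/(n:ℝ)^(k+1)) * ∑' m : ℕ, a m * Real.exp (-(m:ℝ)/n))
      = fun n : ℕ => (1/(n:ℝ)^(k+1)) * ∑' m : ℕ, a m * (x n)^m := by
    funext n
    congr 1
    exact tsum_congr fun m => by rw [hxm n m]
  rw [hrw]
  refine hfinal.congr' ?_
  filter_upwards [eventually_ge_atTop 1] with n hn
  rw [hdecomp n hn]
  ring
end
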